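/- arXiv:0803.4439 — 2 statements merged into one kernel-verified Lean document; each statement's English description precedes it below -/
import Mathlib

section
/- Let n ≥ 2 and let ε ∈ Σ satisfy: σ^j(ε) ≺ ε for every j ≥ 1 with j ≢ 0 (mod n), and σ^j(ε) = ε for every j ≥ 0 with j ≡ 0 (mod n). Then there exists β ∈ (1,2) such that the quasi-greedy expansion d'(β) is defined and d'(β) = ε. -/
/-- A 0-1 sequence: all values are at most 1. Index `k` corresponds to `ε_{k+1}` in the paper. -/
def isSeq (ε : ℕ → ℕ) : Prop := ∀ k, ε k ≤ 1

/-- The shift map σ. -/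
def shift (ε : ℕ → ℕ) : ℕ → ℕ := fun n => ε (n + 1)

/-- The mirror image ε̄, (ε̄)_n = 1 - ε_n. -/
def mirror (ε : ℕ → ℕ) : ℕ → ℕ := fun n => 1 - ε n

/-- Strict lexicographic order on sequences. -/
def lexLt (a b : ℕ → ℕ) : Prop := ∃ k, (∀ j, j < k → a j = b j) ∧ a k < b k

/-- Non-strict lexicographic order. -/
def lexLe (a b : ℕ → ℕ) : Prop := lexLt a b ∨ a = b

/-- ε is periodic with smallest period n ≥ 1. -/
def periodicSmallest (n : ℕ) (ε : ℕ → ℕ) : Prop :=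
  1 ≤ n ∧ shift^[n] ε = ε ∧ ∀ j, 1 ≤ j → j < n → shift^[j] ε ≠ ε

/-- The greedy expansion d(β) of 1 in base β (0-indexed: `greedy β n` is ε_{n+1}). -/
noncomputable def greedy (β : ℝ) : ℕ → ℕ :=
  fun n => (⌊β * ((fun x => Int.fract (β * x))^[n] 1)⌋).toNat

/-- d(β) is finite with last 1 at (0-based) position N. -/
def greedyFinite (β : ℝ) (N : ℕ) : Prop :=
  greedy β N = 1 ∧ ∀ k, N < k → greedy β k = 0

/-- The quasi-greedy expansion d'(β) = (ε_1 … ε_{N} 0)^∞ (block of length N+1),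
where N is the 0-based position of the last 1 of d(β). -/
noncomputable def quasiGreedy (β : ℝ) (N : ℕ) : ℕ → ℕ :=
  fun k => if k % (N + 1) = N then 0 else greedy β (k % (N + 1))

/-
The candidate for `d(β)` is the finite word `c = ε₁ … ε_{n-1} 1 0 0 …`; the hypotheses force
`ε₁ = 1` and `ε_n = 0`, so `ε = (ε₁ … ε_{n-1} 0)^∞` is its quasi-greedy expansion. By the
intermediate value theorem `∑ c_k y^k = 1` has a root `y ∈ (1/2, 1)`, and for `β = 1/y` the orbit
of `1` under `τ_β` is the sequence of tails `∑_j c_{m+j} y^j`. Parry's argument shows every tail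
with `m ≥ 1` is `< 1`: compare it with the full sum at the first index where `σ^m c` drops below
`c`, inducting downwards on `m`. So the greedy digits of `β` are exactly `c`. Finally `σ^m c ≺ c`
holds because the first mismatch between `σ^m ε` and `ε` lies inside the first period.
-/

open Finset Function

theorem shift_iterate_apply (ε : ℕ → ℕ) (j k : ℕ) : shift^[j] ε k = ε (k + j) := by
  induction j generalizing ε with
  | zero => rfl
  | succ j ih => rw [iterate_succ_apply, ih]; rfl

theorem periodic_of_shift_iterate_eq {ε : ℕ → ℕ} {n : ℕ} (h : shift^[n] ε = ε) :
    Periodic ε n := fun k => by rw [← shift_iterate_apply ε n k, h]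

theorem lexLt_asymm {a b : ℕ → ℕ} (hab : lexLt a b) : ¬ lexLt b a := by
  rintro ⟨K', hagree', hlt'⟩
  obtain ⟨K, hagree, hlt⟩ := hab
  rcases lt_trichotomy K K' with h | rfl | h
  · have := hagree' K h; omega
  · omega
  · have := hagree K' h; omega

theorem lexLt_of_le_of_ne {a b : ℕ → ℕ} (hle : ∀ k, a k ≤ b k) (hne : a ≠ b) : lexLt a b := by
  classical
  have hdiff : ∃ k, a k ≠ b k := ne_iff.mp hne
  refine ⟨Nat.find hdiff, fun j hj => not_not.mp (Nat.find_min hdiff hj), ?_⟩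
  exact lt_of_le_of_ne (hle _) (Nat.find_spec hdiff)

noncomputable def tail (c : ℕ → ℕ) (N : ℕ) (y : ℝ) (m : ℕ) : ℝ :=
  ∑ j ∈ range N, (c (m + j) : ℝ) * y ^ (j + 1)

section tail

variable {c : ℕ → ℕ} {N : ℕ} {y : ℝ}

theorem tail_nonneg (hy : 0 ≤ y) (m : ℕ) : 0 ≤ tail c N y m :=
  sum_nonneg fun _ _ => by positivity

theorem tail_eq_zero_of_le (hc : ∀ k, N ≤ k → c k = 0) {m : ℕ} (hm : N ≤ m) :
    tail c N y m = 0 :=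
  sum_eq_zero fun j _ => by rw [hc (m + j) (by omega)]; simp

theorem tail_eq (hc : ∀ k, N ≤ k → c k = 0) (m : ℕ) :
    tail c N y m = y * (c m + tail c N y (m + 1)) := by
  have hext : ∑ j ∈ range (N + 1), (c (m + j) : ℝ) * y ^ (j + 1) = tail c N y m := by
    rw [sum_range_succ, hc (m + N) (by omega)]
    simp [tail]
  rw [← hext, sum_range_succ', tail, mul_add, mul_sum, add_comm]
  congr 1
  · simp [mul_comm]
  · refine sum_congr rfl fun j _ => ?_
    rw [add_right_comm m 1 j, ← add_assoc]
    ring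

theorem tail_eq_sum_add (hc : ∀ k, N ≤ k → c k = 0) (m L : ℕ) :
    tail c N y m = ∑ j ∈ range L, (c (m + j) : ℝ) * y ^ (j + 1) + y ^ L * tail c N y (m + L) := by
  induction L with
  | zero => simp
  | succ L ih =>
    rw [ih, sum_range_succ, tail_eq hc (m + L), ← add_assoc m L 1]
    ring

theorem tail_lt_one (hc : ∀ k, N ≤ k → c k = 0) (hy : 0 < y) (h0 : tail c N y 0 = 1)
    (hlex : ∀ m, 1 ≤ m → lexLt (shift^[m] c) c) (m : ℕ) (hm : 1 ≤ m) : tail c N y m < 1 := by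
  rcases le_or_gt N m with hNm | hmN
  · rw [tail_eq_zero_of_le hc hNm]; exact one_pos
  obtain ⟨K, hagree, hlt⟩ := hlex m hm
  simp only [shift_iterate_apply] at hagree hlt
  have hnext : tail c N y (K + m + 1) < 1 := tail_lt_one hc hy h0 hlex (K + m + 1) (by omega)
  have hdigit : (c (K + m) : ℝ) + 1 ≤ c K := by exact_mod_cast hlt
  have hcmp : tail c N y (m + K) < tail c N y K := by
    rw [add_comm m K, tail_eq hc, tail_eq hc K]
    have := tail_nonneg (c := c) (N := N) hy.le (K + 1)
    gcongr ?_ * ?_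
    linarith
  have hprefix : ∑ j ∈ range K, (c (m + j) : ℝ) * y ^ (j + 1)
      = ∑ j ∈ range K, (c j : ℝ) * y ^ (j + 1) :=
    sum_congr rfl fun j hj => by rw [add_comm m j, hagree j (mem_range.mp hj)]
  calc tail c N y m
      = ∑ j ∈ range K, (c j : ℝ) * y ^ (j + 1) + y ^ K * tail c N y (m + K) := by
        rw [tail_eq_sum_add hc m K, hprefix]
    _ < ∑ j ∈ range K, (c j : ℝ) * y ^ (j + 1) + y ^ K * tail c N y K := by gcongr
    _ = 1 := by rw [← h0, tail_eq_sum_add hc 0 K]; simp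
termination_by N - m

end tail

section greedy

variable {c : ℕ → ℕ} {N : ℕ} {y : ℝ}

theorem inv_mul_tail (hc : ∀ k, N ≤ k → c k = 0) (hy : 0 < y) (m : ℕ) :
    y⁻¹ * tail c N y m = c m + tail c N y (m + 1) := by
  rw [tail_eq hc, inv_mul_cancel_left₀ hy.ne']

theorem iterate_fract_eq_tail (hc : ∀ k, N ≤ k → c k = 0) (hy : 0 < y) (h0 : tail c N y 0 = 1)
    (hlt : ∀ m, 1 ≤ m → tail c N y m < 1) (m : ℕ) :
    (fun x => Int.fract (y⁻¹ * x))^[m] 1 = tail c N y m := by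
  induction m with
  | zero => exact h0.symm
  | succ m ih =>
    rw [iterate_succ_apply', ih, inv_mul_tail hc hy, Int.fract_natCast_add,
      Int.fract_eq_self.mpr ⟨tail_nonneg hy.le _, hlt _ (Nat.le_add_left 1 m)⟩]

theorem greedy_inv_eq (hc : ∀ k, N ≤ k → c k = 0) (hy : 0 < y) (h0 : tail c N y 0 = 1)
    (hlt : ∀ m, 1 ≤ m → tail c N y m < 1) : greedy y⁻¹ = c := by
  funext m
  rw [greedy, iterate_fract_eq_tail hc hy h0 hlt, inv_mul_tail hc hy, Int.floor_natCast_add,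
    Int.floor_eq_zero_iff.mpr ⟨tail_nonneg hy.le _, hlt _ (Nat.le_add_left 1 m)⟩, add_zero,
    Int.toNat_natCast]

theorem sum_range_half_pow_succ_lt_one (N : ℕ) : ∑ j ∈ range N, (1 / 2 : ℝ) ^ (j + 1) < 1 := by
  have hgeom := geom_sum_eq (x := (1 / 2 : ℝ)) (by norm_num) N
  simp only [pow_succ, ← sum_mul, hgeom]
  have : (0 : ℝ) < (1 / 2) ^ N := by positivity
  field_simp
  norm_num
  linarith

theorem exists_tail_zero_eq_one (hc : isSeq c) (h0 : c 0 = 1) {k : ℕ} (hk0 : 0 < k) (hkN : k < N)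
    (hk : c k = 1) : ∃ y, 1 / 2 < y ∧ y < 1 ∧ tail c N y 0 = 1 := by
  have hcont : Continuous (tail c N · 0) := by unfold tail; fun_prop
  have hhalf : tail c N (1 / 2) 0 < 1 := by
    refine lt_of_le_of_lt (sum_le_sum fun j _ => ?_) (sum_range_half_pow_succ_lt_one N)
    have : (c (0 + j) : ℝ) ≤ 1 := by exact_mod_cast hc _
    have : (0 : ℝ) ≤ (1 / 2) ^ (j + 1) := by positivity
    nlinarith
  have hone : 1 < tail c N 1 0 := by
    have hpair : ({0, k} : Finset ℕ) ⊆ range N := by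
      intro j hj
      simp only [mem_insert, mem_singleton] at hj
      rcases hj with rfl | rfl <;> exact mem_range.mpr (by omega)
    calc (1 : ℝ) < ∑ j ∈ {0, k}, (c (0 + j) : ℝ) * 1 ^ (j + 1) := by
          rw [sum_pair hk0.ne]; simp [h0, hk]
      _ ≤ tail c N 1 0 := sum_le_sum_of_subset_of_nonneg hpair fun _ _ _ => by positivity
  obtain ⟨y, ⟨hy2, hy1⟩, hy⟩ :=
    intermediate_value_Ioo (by norm_num) hcont.continuousOn ⟨hhalf, hone⟩
  exact ⟨y, hy2, hy1, hy⟩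

/-- Parry's criterion for finite expansions. -/
theorem exists_greedy_eq (hc : isSeq c) (hcN : ∀ k, N ≤ k → c k = 0) (h0 : c 0 = 1) {k : ℕ}
    (hk0 : 0 < k) (hk : c k = 1) (hlex : ∀ m, 1 ≤ m → lexLt (shift^[m] c) c) :
    ∃ β : ℝ, (1 < β ∧ β < 2) ∧ greedy β = c := by
  have hkN : k < N := by by_contra! h; simp [hcN k h] at hk
  obtain ⟨y, hy2, hy1, hy⟩ := exists_tail_zero_eq_one hc h0 hk0 hkN hk
  have hy0 : 0 < y := by linarith
  refine ⟨y⁻¹, ⟨one_lt_inv₀ hy0 |>.mpr hy1, ?_⟩, greedy_inv_eq hcN hy0 hy (tail_lt_one hcN hy0 hy hlex)⟩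
  rw [inv_lt_comm₀ hy0 two_pos]
  linarith

end greedy

section periodic

variable {n : ℕ} {ε : ℕ → ℕ}

theorem exists_first_diff_add_lt (hper : Periodic ε n)
    (hlex : ∀ m, 0 < m → m < n → lexLt (shift^[m] ε) ε) {m : ℕ} (hm : 0 < m) (hmn : m < n) :
    ∃ K, K + m < n ∧ (∀ j < K, ε (j + m) = ε j) ∧ ε (K + m) < ε K := by
  obtain ⟨K, hagree, hlt⟩ := hlex m hm hmn
  simp only [shift_iterate_apply] at hagree hlt
  refine ⟨K, ?_, hagree, hlt⟩
  by_contra! hKm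
  -- otherwise the same mismatch, read one period earlier, makes `ε ≺ σ^(n-m) ε`
  refine lexLt_asymm (hlex (n - m) (by omega) (by omega)) ⟨K + m - n, fun j hj => ?_, ?_⟩
  · rw [shift_iterate_apply, ← hagree (j + (n - m)) (by omega), ← hper j]
    congr 1
    omega
  · rw [shift_iterate_apply, ← hper, Nat.sub_add_cancel hKm, Nat.sub_add_sub_cancel hKm hmn.le]
    simpa [Nat.add_sub_cancel] using hlt

theorem first_digit_eq_one_and_last_eq_zero (hn : 2 ≤ n) (hseq : isSeq ε) (hper : Periodic ε n)
    (hlex : ∀ m, 0 < m → m < n → lexLt (shift^[m] ε) ε) : ε 0 = 1 ∧ ε (n - 1) = 0 := by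
  obtain ⟨K, hK, -, hlt⟩ := exists_first_diff_add_lt hper hlex (m := n - 1) (by omega) (by omega)
  obtain rfl : K = 0 := by omega
  have := hseq 0
  simp only [zero_add] at hlt
  omega

end periodic

/-- The finite sequence `ε₁ … ε_{n-1} 1 0 0 …`, the candidate for `d(β)` when `ε = d'(β)`. -/
def finiteBlock (n : ℕ) (ε : ℕ → ℕ) : ℕ → ℕ :=
  fun k => if k + 1 < n then ε k else if k + 1 = n then 1 else 0

section finiteBlock

variable {n : ℕ} {ε : ℕ → ℕ}

theorem finiteBlock_of_lt {k : ℕ} (hk : k + 1 < n) : finiteBlock n ε k = ε k := if_pos hk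

theorem finiteBlock_pred (hn : 1 ≤ n) : finiteBlock n ε (n - 1) = 1 := by
  simp [finiteBlock, Nat.sub_add_cancel hn]

theorem finiteBlock_of_le {k : ℕ} (hk : n ≤ k) : finiteBlock n ε k = 0 := by
  rw [finiteBlock, if_neg (by omega), if_neg (by omega)]

theorem isSeq_finiteBlock (hseq : isSeq ε) : isSeq (finiteBlock n ε) := by
  intro k
  unfold finiteBlock
  split_ifs
  exacts [hseq k, le_rfl, zero_le_one]

theorem lexLt_shift_iterate_finiteBlock (hn : 0 < n) (hper : Periodic ε n)
    (hlex : ∀ m, 0 < m → m < n → lexLt (shift^[m] ε) ε) {m : ℕ} (hm : 1 ≤ m) :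
    lexLt (shift^[m] (finiteBlock n ε)) (finiteBlock n ε) := by
  have hne : shift^[m] (finiteBlock n ε) ≠ finiteBlock n ε := fun h => by
    have := congrFun h (n - 1)
    rw [shift_iterate_apply, finiteBlock_of_le (by omega), finiteBlock_pred (by omega)] at this
    exact zero_ne_one this
  rcases lt_or_ge m n with hmn | hnm
  · obtain ⟨K, hKm, hagree, hlt⟩ := exists_first_diff_add_lt hper hlex (by omega) hmn
    rcases Nat.lt_or_ge (K + m + 1) n with hKm' | hKm'
    · refine ⟨K, fun j hj => ?_, ?_⟩ <;>
        simp only [shift_iterate_apply, finiteBlock_of_lt (n := n) (by omega : K + 1 < n),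
          finiteBlock_of_lt (by omega : K + m + 1 < n)]
      · rw [finiteBlock_of_lt (by omega), finiteBlock_of_lt (by omega), hagree j hj]
      · exact hlt
    -- the mismatch hits the raised last digit, so `σ^m` of the block is a truncation of it
    refine lexLt_of_le_of_ne (fun j => ?_) hne
    rw [shift_iterate_apply]
    rcases lt_trichotomy j K with hj | rfl | hj
    · rw [finiteBlock_of_lt (by omega), finiteBlock_of_lt (by omega), hagree j hj]
    · rw [show j + m = n - 1 by omega, finiteBlock_pred (by omega), finiteBlock_of_lt (by omega)]
      omega
    · rw [finiteBlock_of_le (by omega)]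
      exact Nat.zero_le _
  · refine lexLt_of_le_of_ne (fun j => ?_) hne
    rw [shift_iterate_apply, finiteBlock_of_le (by omega)]
    exact Nat.zero_le _

end finiteBlock

/-- If σ^j(ε) ≺ ε for j ≢ 0 (mod n), j ≥ 1, and σ^j(ε) = ε for j ≡ 0 (mod n),
then ε = d'(β) for some β ∈ (1,2). -/
theorem stmt3 (n : ℕ) (hn : 2 ≤ n) (ε : ℕ → ℕ) (hseq : isSeq ε)
    (h1 : ∀ j, 1 ≤ j → j % n ≠ 0 → lexLt (shift^[j] ε) ε)
    (h2 : ∀ j, j % n = 0 → shift^[j] ε = ε) :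
    ∃ β : ℝ, (1 < β ∧ β < 2) ∧ ∃ N, greedyFinite β N ∧ quasiGreedy β N = ε := by
  have hper : Periodic ε n := periodic_of_shift_iterate_eq (h2 n (Nat.mod_self n))
  have hlex : ∀ m, 0 < m → m < n → lexLt (shift^[m] ε) ε := fun m hm hmn =>
    h1 m hm (by rw [Nat.mod_eq_of_lt hmn]; omega)
  obtain ⟨hfirst, hlast⟩ := first_digit_eq_one_and_last_eq_zero hn hseq hper hlex
  obtain ⟨β, hβ, hgreedy⟩ := exists_greedy_eq (isSeq_finiteBlock hseq) (fun k => finiteBlock_of_le)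
    (by rw [finiteBlock_of_lt (by omega), hfirst]) (k := n - 1) (by omega)
    (finiteBlock_pred (by omega)) fun m => lexLt_shift_iterate_finiteBlock (by omega) hper hlex
  refine ⟨β, hβ, n - 1, ⟨?_, fun k hk => ?_⟩, funext fun k => ?_⟩
  · rw [hgreedy, finiteBlock_pred (by omega)]
  · rw [hgreedy, finiteBlock_of_le (by omega)]
  · have hk := Nat.mod_lt k (by omega : 0 < n)
    rw [quasiGreedy, Nat.sub_add_cancel (by omega : 1 ≤ n), hgreedy, ← hper.map_mod_nat k]
    split_ifs with hkn
    · rw [hkn, hlast]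
    · exact finiteBlock_of_lt (by omega)
end

section
/- For all integers k, m ≥ 2, a_k ≻ a_m in the lexicographic order if and only if k ▷ m in the Sharkovskii ordering (k comes before m). -/
/-- The set Γ = {ε ∈ Σ : ε̄ ⪯ σ^k(ε) ⪯ ε for all k ≥ 0}. -/
def Gamma (ε : ℕ → ℕ) : Prop :=
  isSeq ε ∧ ∀ k, lexLe (mirror ε) (shift^[k] ε) ∧ lexLe (shift^[k] ε) ε

/-- `a` is the lexicographically least element of Γ among those periodic with
smallest period k. -/
def minGamma (k : ℕ) (a : ℕ → ℕ) : Prop :=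
  (Gamma a ∧ periodicSmallest k a) ∧ ∀ b, Gamma b → periodicSmallest k b → lexLe a b

/-- k ▷ m in the Sharkovskii ordering: k comes before m. -/
def sharkGt (k m : ℕ) : Prop :=
  ∃ i p j q : ℕ, k = 2 ^ i * (2 * p + 1) ∧ m = 2 ^ j * (2 * q + 1) ∧
    ((1 ≤ p ∧ 1 ≤ q ∧ i < j) ∨ (1 ≤ p ∧ 1 ≤ q ∧ i = j ∧ p < q) ∨
     (1 ≤ p ∧ q = 0) ∨ (p = 0 ∧ q = 0 ∧ j < i))

/-! ### Basic infrastructure -/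

lemma shift_iter (ε : ℕ → ℕ) (n j : ℕ) : (shift^[n] ε) j = ε (n + j) := by
  induction n generalizing ε j with
  | zero => simp
  | succ n ih =>
    rw [Function.iterate_succ_apply, ih]
    simp only [shift]
    congr 1
    omega

lemma funext_of_agree {a b : ℕ → ℕ} (h : ∀ j, a j = b j) : a = b := funext h

lemma lexLt_irrefl (a : ℕ → ℕ) : ¬ lexLt a a := by
  rintro ⟨k, _, hk⟩; exact lt_irrefl _ hk

lemma lexLt_asymm_s6 {a b : ℕ → ℕ} (h1 : lexLt a b) (h2 : lexLt b a) : False := by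
  obtain ⟨k, hk1, hk2⟩ := h1
  obtain ⟨l, hl1, hl2⟩ := h2
  rcases lt_trichotomy k l with h | h | h
  · rw [hl1 k h] at hk2; exact lt_irrefl _ hk2
  · subst h; omega
  · rw [hk1 l h] at hl2; exact lt_irrefl _ hl2

lemma lexLt_not_le {a b : ℕ → ℕ} (h : lexLt a b) : ¬ lexLe b a := by
  rintro (h2 | h2)
  · exact lexLt_asymm_s6 h h2
  · subst h2; exact lexLt_irrefl _ h

lemma lexLe_refl (a : ℕ → ℕ) : lexLe a a := Or.inr rfl

lemma lexLe_antisymm {a b : ℕ → ℕ} (h1 : lexLe a b) (h2 : lexLe b a) : a = b := by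
  rcases h1 with h1 | rfl
  · exact absurd h2 (lexLt_not_le h1)
  · rfl

lemma lexLt_trans {a b c : ℕ → ℕ} (h1 : lexLt a b) (h2 : lexLt b c) : lexLt a c := by
  obtain ⟨k, hk1, hk2⟩ := h1
  obtain ⟨l, hl1, hl2⟩ := h2
  refine ⟨min k l, fun j hj => ?_, ?_⟩
  · rw [hk1 j (lt_of_lt_of_le hj (min_le_left _ _)), hl1 j (lt_of_lt_of_le hj (min_le_right _ _))]
  · rcases lt_trichotomy k l with h | h | h
    · rw [min_eq_left h.le]; rw [← hl1 k h]; exact hk2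
    · subst h; rw [min_self]; exact hk2.trans hl2
    · rw [min_eq_right h.le, hk1 l h]; exact hl2

lemma lexLt_of_le_of_lt {a b c : ℕ → ℕ} (h1 : lexLe a b) (h2 : lexLt b c) : lexLt a c := by
  rcases h1 with h1 | rfl
  · exact lexLt_trans h1 h2
  · exact h2

lemma lexLt_of_lt_of_le {a b c : ℕ → ℕ} (h1 : lexLt a b) (h2 : lexLe b c) : lexLt a c := by
  rcases h2 with h2 | rfl
  · exact lexLt_trans h1 h2
  · exact h1

lemma lexLe_trans {a b c : ℕ → ℕ} (h1 : lexLe a b) (h2 : lexLe b c) : lexLe a c := by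
  rcases h1 with h1 | rfl
  · exact Or.inl (lexLt_of_lt_of_le h1 h2)
  · exact h2

open Classical in
lemma lex_total (a b : ℕ → ℕ) : lexLe a b ∨ lexLt b a := by
  by_cases hab : a = b
  · exact Or.inl (Or.inr hab)
  · have hex : ∃ n, a n ≠ b n := by
      by_contra h
      push_neg at h
      exact hab (funext h)
    classical
    let k := Nat.find hex
    have hk : a k ≠ b k := Nat.find_spec hex
    have hagree : ∀ j, j < k → a j = b j := fun j hj => by
      by_contra h
      have : Nat.find hex ≤ j := Nat.find_le h
      omega
    rcases lt_or_gt_of_ne hk with h | h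
    · exact Or.inl (Or.inl ⟨k, hagree, h⟩)
    · exact Or.inr ⟨k, fun j hj => (hagree j hj).symm, h⟩

/-- From failure of `lexLe x y` get a strict `lexLt y x`. -/
lemma lexLt_of_not_le {a b : ℕ → ℕ} (h : ¬ lexLe a b) : lexLt b a := by
  rcases lex_total a b with h1 | h1
  · exact absurd h1 h
  · exact h1

/-! ### Periodicity lemmas -/

lemma periodic_add {ε : ℕ → ℕ} {K : ℕ} (h : shift^[K] ε = ε) (n : ℕ) :
    ε (n + K) = ε n := by
  conv_rhs => rw [← h]
  rw [shift_iter]; ring_nf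

lemma periodic_mul_add {ε : ℕ → ℕ} {K : ℕ} (h : shift^[K] ε = ε) (t n : ℕ) :
    ε (n + t * K) = ε n := by
  induction t with
  | zero => simp
  | succ t ih => 
    have : n + (t+1) * K = (n + t * K) + K := by ring
    rw [this, periodic_add h, ih]

lemma periodic_mod {ε : ℕ → ℕ} {K : ℕ} (hK : 1 ≤ K) (h : shift^[K] ε = ε) (n : ℕ) :
    ε n = ε (n % K) := by
  conv_lhs => rw [← Nat.mod_add_div n K]
  rw [Nat.mul_comm]
  exact periodic_mul_add h _ _

lemma shift_iter_mul {ε : ℕ → ℕ} {K : ℕ} (h : shift^[K] ε = ε) (t : ℕ) :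
    shift^[t * K] ε = ε := by
  induction t with
  | zero => simp
  | succ t ih => rw [Nat.succ_mul, Function.iterate_add_apply, h, ih]

/-- The smallest period divides every period. -/
lemma smallest_period_dvd {ε : ℕ → ℕ} {q p : ℕ} (hq : periodicSmallest q ε)
    (hp : shift^[p] ε = ε) : q ∣ p := by
  obtain ⟨hq1, hq2, hq3⟩ := hq
  have hr : shift^[p % q] ε = ε := by
    have e1 : p % q + p / q * q = p := Nat.mod_add_div' p q
    have h2 : shift^[p % q] ε = shift^[p] ε := by
      conv_rhs => rw [← e1]
      rw [Function.iterate_add_apply, shift_iter_mul hq2]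
    exact h2.trans hp
  by_contra h
  have h1 : 1 ≤ p % q := by
    rcases Nat.eq_zero_or_pos (p % q) with h0 | h0
    · exact absurd (Nat.dvd_of_mod_eq_zero h0) h
    · exact h0
  exact hq3 _ h1 (Nat.mod_lt _ hq1) hr

/-! ### The doubling operator and explicit minimal sequences -/

/-- Doubling operator: D(c) = 1, c₀, 1-c₀, c₁, 1-c₁, … -/
def Dop (c : ℕ → ℕ) : ℕ → ℕ := fun n =>
  if n = 0 then 1 else if n % 2 = 1 then c (n / 2) else 1 - c (n / 2 - 1)

/-- Minimal odd-period word: (1(10)^q)^∞ for r = 2q+1. -/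
def Ew (r : ℕ) : ℕ → ℕ := fun n => if n % r = 0 then 1 else (n % r) % 2

/-- (10)^∞. -/
def ten : ℕ → ℕ := fun n => 1 - n % 2

/-- The constant sequence 1. -/
def oneS : ℕ → ℕ := fun _ => 1

/-- Λ = 1(10)^∞ = D(1^∞). -/
def lam : ℕ → ℕ := Dop oneS

/-- The minimal Γ-sequence of smallest period k (for k ≥ 2). -/
def AA : ℕ → (ℕ → ℕ) := fun k =>
  if k % 2 = 1 then Ew k
  else if k ≤ 2 then ten
  else Dop (AA (k / 2))
decreasing_by omega

lemma Dop_zero (c : ℕ → ℕ) : Dop c 0 = 1 := rfl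

lemma Dop_odd (c : ℕ → ℕ) (j : ℕ) : Dop c (2 * j + 1) = c j := by
  simp only [Dop]
  rw [if_neg (by omega), if_pos (by omega)]
  congr 1; omega

lemma Dop_even (c : ℕ → ℕ) (j : ℕ) : Dop c (2 * j + 2) = 1 - c j := by
  simp only [Dop]
  rw [if_neg (by omega), if_neg (by omega)]
  have : (2 * j + 2) / 2 - 1 = j := by omega
  rw [this]

lemma lam_val (n : ℕ) : lam n = if n = 0 then 1 else n % 2 := by
  rcases Nat.eq_zero_or_pos n with rfl | hn
  · rfl
  rcases Nat.even_or_odd n with ⟨j, hj⟩ | ⟨j, hj⟩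
  · have hj' : n = 2 * (j - 1) + 2 := by omega
    rw [hj']
    show Dop oneS (2 * (j-1) + 2) = _
    rw [Dop_even]
    simp only [oneS]
    rw [if_neg (by omega)]
    omega
  · have hj' : n = 2 * j + 1 := by omega
    rw [hj']
    show Dop oneS (2 * j + 1) = _
    rw [Dop_odd]
    simp only [oneS]
    rw [if_neg (by omega)]
    omega

lemma ten_even (j : ℕ) : ten (2 * j) = 1 := by simp [ten, Nat.mul_mod_right]
lemma ten_odd (j : ℕ) : ten (2 * j + 1) = 0 := by
  simp [ten, Nat.add_mod, Nat.mul_mod_right]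

lemma isSeq_Dop {c : ℕ → ℕ} (hc : isSeq c) : isSeq (Dop c) := by
  intro n
  simp only [Dop]
  split
  · omega
  · split
    · exact hc _
    · omega

lemma isSeq_Ew (r : ℕ) : isSeq (Ew r) := by
  intro n; simp only [Ew]; split
  · omega
  · omega

lemma isSeq_ten : isSeq ten := fun n => by simp [ten]

lemma isSeq_lam : isSeq lam := isSeq_Dop (fun _ => le_refl 1)

/-! ### The half-Gamma class -/

/-- Weakened Γ: only the shift conditions guarded by the preceding symbol.
These are the only conditions used, and they pass to D-preimages. -/
def GammaH (ε : ℕ → ℕ) : Prop :=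
  isSeq ε ∧ ε 0 = 1 ∧ ∀ n,
    (ε n = 0 → lexLe (shift^[n+1] ε) ε) ∧ (ε n = 1 → lexLe (mirror ε) (shift^[n+1] ε))

lemma lexLe_agree_le {u v : ℕ → ℕ} {d : ℕ} (h : lexLe u v)
    (hag : ∀ j, j < d → u j = v j) : u d ≤ v d := by
  rcases h with ⟨k, hk1, hk2⟩ | rfl
  · rcases lt_trichotomy k d with hkd | rfl | hkd
    · exact absurd (hag k hkd) (by omega)
    · exact hk2.le
    · exact (hk1 d hkd).le
  · exact le_refl _

lemma Gamma_zero_one {ε : ℕ → ℕ} (h : Gamma ε) : ε 0 = 1 := by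
  have h1 := (h.2 0).1
  simp only [Function.iterate_zero, id_eq] at h1
  have h2 := lexLe_agree_le h1 (d := 0) (fun j hj => absurd hj (by omega))
  have h3 := h.1 0
  simp only [mirror] at h2
  omega

lemma Gamma_to_GammaH {ε : ℕ → ℕ} (h : Gamma ε) : GammaH ε :=
  ⟨h.1, Gamma_zero_one h, fun n => ⟨fun _ => (h.2 (n+1)).2, fun _ => (h.2 (n+1)).1⟩⟩

lemma GH_le {ε : ℕ → ℕ} (h : GammaH ε) {n m : ℕ} (h0 : ε n = 0) (hm : m = n + 1) :
    lexLe (shift^[m] ε) ε := by subst hm; exact (h.2.2 n).1 h0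

lemma GH_ge {ε : ℕ → ℕ} (h : GammaH ε) {n m : ℕ} (h0 : ε n = 1) (hm : m = n + 1) :
    lexLe (mirror ε) (shift^[m] ε) := by subst hm; exact (h.2.2 n).2 h0

/-- Forcing from shift-maximality: values of ε at offset m are ≤ prefix values
as long as they agree before. -/
lemma force_le {ε : ℕ → ℕ} {m d : ℕ} (h : lexLe (shift^[m] ε) ε)
    (hag : ∀ j, j < d → ε (m + j) = ε j) : ε (m + d) ≤ ε d := by
  have := lexLe_agree_le h (d := d) (fun j hj => by rw [shift_iter]; exact hag j hj)
  rwa [shift_iter] at this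

/-- Forcing from mirror-minimality. -/
lemma force_ge {ε : ℕ → ℕ} {m d : ℕ} (h : lexLe (mirror ε) (shift^[m] ε))
    (hag : ∀ j, j < d → 1 - ε j = ε (m + j)) : 1 - ε d ≤ ε (m + d) := by
  have := lexLe_agree_le h (d := d)
    (fun j hj => by rw [shift_iter]; exact hag j hj)
  rwa [shift_iter] at this

/-- To contradict `lexLe u ε`: exhibit agreement then strictly bigger value. -/
lemma not_lexLe_of_gt {u v : ℕ → ℕ} {d : ℕ} (hag : ∀ j, j < d → v j = u j)
    (hd : u d < v d) : ¬ lexLe v u := lexLt_not_le ⟨d, fun j hj => (hag j hj).symm, hd⟩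

lemma GammaH_val_cases {ε : ℕ → ℕ} (h : GammaH ε) (n : ℕ) : ε n = 0 ∨ ε n = 1 := by
  have := h.1 n; omega

/-- If ε ∈ ΓH starts with 10, then ε = (10)^∞. -/
lemma GammaH_ten {ε : ℕ → ℕ} (h : GammaH ε) (h1 : ε 1 = 0) : ε = ten := by
  have hseq := h.1
  have h0 := h.2.1
  have main : ∀ n, ε (2 * n) = 1 ∧ ε (2 * n + 1) = 0 := by
    intro n
    induction n with
    | zero => exact ⟨h0, h1⟩
    | succ n ih =>
      have he : ε (2 * n + 2) = 1 := by
        have hg := GH_ge h ih.1 (show 2*n+1 = 2*n+0+1 by ring)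
        have H := force_ge (m := 2*n+1) (d := 1) hg ?_
        · have h5 : 2 * n + 1 + 1 = 2 * n + 2 := by ring
          rw [h5] at H
          have := hseq (2*n+2)
          omega
        · intro j hj
          interval_cases j
          have h5 : 2 * n + 1 + 0 = 2 * n + 1 := by ring
          rw [h5, h0, ih.2]
      refine ⟨he, ?_⟩
      have hg := GH_le h ih.2 (show 2*n+2 = (2*n+1)+1 by ring)
      have H := force_le (m := 2*n+2) (d := 1) hg ?_
      · rw [h1] at H
        show ε (2*n+2+1) = 0
        omega
      · intro j hj
        interval_cases j
        have h5 : 2 * n + 2 + 0 = 2 * n + 2 := by ring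
        rw [h5, h0, he]
  funext n
  rcases Nat.even_or_odd n with ⟨j, hj⟩ | ⟨j, hj⟩
  · have : n = 2 * j := by omega
    rw [this, (main j).1, ten_even]
  · have : n = 2 * j + 1 := by omega
    rw [this, (main j).2, ten_odd]
/-! ### Defect machinery: in a periodic ΓH-sequence below Λ all defects are even -/

lemma not_le_of_gt' {ε : ℕ → ℕ} {m d : ℕ} (hag : ∀ j, j < d → ε (m + j) = ε j)
    (hd : ε d < ε (m + d)) : ¬ lexLe (shift^[m] ε) ε :=
  lexLt_not_le ⟨d, fun j hj => by rw [shift_iter]; exact (hag j hj).symm,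
    by rw [shift_iter]; exact hd⟩

lemma not_ge_of_lt' {ε : ℕ → ℕ} {m d : ℕ} (hag : ∀ j, j < d → ε (m + j) = 1 - ε j)
    (hd : ε (m + d) < 1 - ε d) : ¬ lexLe (mirror ε) (shift^[m] ε) :=
  fun hle => lexLt_not_le
    ⟨d, fun j hj => by rw [shift_iter, mirror]; exact hag j hj,
      by rw [shift_iter, mirror]; exact hd⟩ hle

/-- ε starts with 1 1 (01)^{s-1} 0 0 : the prefix forced by ε ≺ Λ (with first
difference at position 2s+1). -/
def PreS (ε : ℕ → ℕ) (s : ℕ) : Prop :=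
  1 ≤ s ∧ ε 0 = 1 ∧ ε 1 = 1 ∧ (∀ u, 1 ≤ u → u ≤ s - 1 → ε (2*u) = 0 ∧ ε (2*u+1) = 1) ∧
    ε (2*s) = 0 ∧ ε (2*s+1) = 0

/-- No two consecutive 11-defects. -/
lemma claim11 {ε : ℕ → ℕ} (h : GammaH ε) {s : ℕ} (hp : PreS ε s) {t a : ℕ}
    (ht : 1 ≤ t) (hgu : ε (t-1) = 0) (h0 : ε t = 1) (h1 : ε (t+1) = 1)
    (hpat : ∀ u, 1 ≤ u → u ≤ a → ε (t+2*u) = 0 ∧ ε (t+2*u+1) = 1)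
    (hend : ε (t+2*a+2) = 1) : False := by
  obtain ⟨hs, he0, he1, hepre, he2s, he2s1⟩ := hp
  have hle := GH_le h hgu (show t = (t-1)+1 by omega)
  rcases le_or_gt (a+1) s with hc | hc
  · -- first difference at d = 2a+2
    refine not_le_of_gt' (m := t) (d := 2*a+2) ?_ ?_ hle
    · intro j hj
      rcases Nat.even_or_odd j with ⟨u, hu⟩ | ⟨u, hu⟩
      · have hju : j = 2*u := by omega
        subst hju
        rcases Nat.eq_zero_or_pos u with rfl | hu1
        · simpa [he0] using h0
        · have hl := (hpat u hu1 (by omega)).1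
          have hr := (hepre u hu1 (by omega)).1
          omega
      · have hju : j = 2*u+1 := by omega
        subst hju
        rcases Nat.eq_zero_or_pos u with rfl | hu1
        · have e : t + (2*0+1) = t+1 := by ring
          rw [e]; simp [he1, h1]
        · have hl := (hpat u hu1 (by omega)).2
          have hr := (hepre u hu1 (by omega)).2
          have e : t + (2*u+1) = t + 2*u + 1 := by ring
          rw [e]; omega
    · have hval : ε (2*a+2) = 0 := by
        rcases eq_or_lt_of_le hc with he | hlt
        · rw [show 2*a+2 = 2*s by omega]; exact he2s
        · have := (hepre (a+1) (by omega) (by omega)).1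
          rw [show 2*a+2 = 2*(a+1) by ring]; exact this
      rw [show t + (2*a+2) = t+2*a+2 by ring, hend, hval]; omega
  · -- a ≥ s : first difference at d = 2s+1
    refine not_le_of_gt' (m := t) (d := 2*s+1) ?_ ?_ hle
    · intro j hj
      rcases Nat.even_or_odd j with ⟨u, hu⟩ | ⟨u, hu⟩
      · have hju : j = 2*u := by omega
        subst hju
        rcases Nat.eq_zero_or_pos u with rfl | hu1
        · simpa [he0] using h0
        · have hl := (hpat u hu1 (by omega)).1
          have hr : ε (2*u) = 0 := by
            rcases eq_or_lt_of_le (show u ≤ s by omega) with he | hlt2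
            · rw [he]; exact he2s
            · exact (hepre u hu1 (by omega)).1
          omega
      · have hju : j = 2*u+1 := by omega
        subst hju
        rcases Nat.eq_zero_or_pos u with rfl | hu1
        · have e : t + (2*0+1) = t+1 := by ring
          rw [e]; simp [he1, h1]
        · have hl := (hpat u hu1 (by omega)).2
          have hr := (hepre u hu1 (by omega)).2
          have e : t + (2*u+1) = t + 2*u + 1 := by ring
          rw [e]; omega
    · have hl := (hpat s hs (by omega)).2
      rw [show t + (2*s+1) = t + 2*s + 1 by ring, hl, he2s1]; omega

/-- No two consecutive 00-defects. -/
lemma claim00 {ε : ℕ → ℕ} (h : GammaH ε) {s : ℕ} (hp : PreS ε s) {t a : ℕ}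
    (ht : 1 ≤ t) (hgu : ε (t-1) = 1) (h0 : ε t = 0) (h1 : ε (t+1) = 0)
    (hpat : ∀ u, 1 ≤ u → u ≤ a → ε (t+2*u) = 1 ∧ ε (t+2*u+1) = 0)
    (hend : ε (t+2*a+2) = 0) : False := by
  obtain ⟨hs, he0, he1, hepre, he2s, he2s1⟩ := hp
  have hge := GH_ge h hgu (show t = (t-1)+1 by omega)
  rcases le_or_gt (a+1) s with hc | hc
  · refine not_ge_of_lt' (m := t) (d := 2*a+2) ?_ ?_ hge
    · intro j hj
      rcases Nat.even_or_odd j with ⟨u, hu⟩ | ⟨u, hu⟩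
      · have hju : j = 2*u := by omega
        subst hju
        rcases Nat.eq_zero_or_pos u with rfl | hu1
        · simpa [he0] using h0
        · have hl := (hpat u hu1 (by omega)).1
          have hr := (hepre u hu1 (by omega)).1
          omega
      · have hju : j = 2*u+1 := by omega
        subst hju
        rcases Nat.eq_zero_or_pos u with rfl | hu1
        · have e : t + (2*0+1) = t+1 := by ring
          rw [e]; simp [he1, h1]
        · have hl := (hpat u hu1 (by omega)).2
          have hr := (hepre u hu1 (by omega)).2
          have e : t + (2*u+1) = t + 2*u + 1 := by ring
          rw [e]; omega
    · have hval : ε (2*a+2) = 0 := by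
        rcases eq_or_lt_of_le hc with he | hlt
        · rw [show 2*a+2 = 2*s by omega]; exact he2s
        · have := (hepre (a+1) (by omega) (by omega)).1
          rw [show 2*a+2 = 2*(a+1) by ring]; exact this
      rw [show t + (2*a+2) = t+2*a+2 by ring, hend, hval]; omega
  · refine not_ge_of_lt' (m := t) (d := 2*s+1) ?_ ?_ hge
    · intro j hj
      rcases Nat.even_or_odd j with ⟨u, hu⟩ | ⟨u, hu⟩
      · have hju : j = 2*u := by omega
        subst hju
        rcases Nat.eq_zero_or_pos u with rfl | hu1
        · simpa [he0] using h0
        · have hl := (hpat u hu1 (by omega)).1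
          have hr : ε (2*u) = 0 := by
            rcases eq_or_lt_of_le (show u ≤ s by omega) with he | hlt2
            · rw [he]; exact he2s
            · exact (hepre u hu1 (by omega)).1
          omega
      · have hju : j = 2*u+1 := by omega
        subst hju
        rcases Nat.eq_zero_or_pos u with rfl | hu1
        · have e : t + (2*0+1) = t+1 := by ring
          rw [e]; simp [he1, h1]
        · have hl := (hpat u hu1 (by omega)).2
          have hr := (hepre u hu1 (by omega)).2
          have e : t + (2*u+1) = t + 2*u + 1 := by ring
          rw [e]; omega
    · have hl := (hpat s hs (by omega)).2
      rw [show t + (2*s+1) = t + 2*s + 1 by ring, hl, he2s1]; omega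
/-- Between consecutive defects the sequence alternates; consecutive defects
have opposite type and even distance. -/
lemma step_defect {ε : ℕ → ℕ} (h : GammaH ε) {s : ℕ} (hp : PreS ε s) {t t' : ℕ}
    (ht : 1 ≤ t) (hdt : ε t = ε (t+1)) (hguard : ε (t-1) ≠ ε t)
    (htt : t < t') (hdt' : ε t' = ε (t'+1))
    (hbetween : ∀ v, t < v → v < t' → ε v ≠ ε (v+1)) :
    ε t' = 1 - ε t ∧ (t' - t) % 2 = 0 := by
  have hseq := h.1
  -- alternation after the defect at t
  have halt : ∀ r, t+1+r ≤ t' → ε (t+1+r) = (if r % 2 = 0 then ε (t+1) else 1 - ε (t+1)) := by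
    intro r
    induction r with
    | zero => intro _; simp
    | succ r ih =>
      intro hr
      have h1 := ih (by omega)
      have hb := hbetween (t+1+r) (by omega) (by omega)
      have hv1 := hseq (t+1+r)
      have hv2 := hseq (t+1+r+1)
      have hv3 := hseq (t+1)
      rw [show t+1+(r+1) = t+1+r+1 by ring]
      rcases Nat.mod_two_eq_zero_or_one r with hr2 | hr2
      · rw [if_pos hr2] at h1
        rw [if_neg (by omega)]
        omega
      · rw [if_neg (by omega)] at h1
        rw [if_pos (by omega)]
        omega
  have hseq1 := hseq t
  have hseq2 := hseq (t+1)
  have hseq3 := hseq t'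
  have hseq4 := hseq (t-1)
  -- rule out same-type consecutive defects
  have hne : ε t' ≠ ε t := by
    intro hsame
    have hrstar := halt (t' - (t+1)) (by omega)
    rw [show t+1+(t' - (t+1)) = t' by omega] at hrstar
    have hrpar : (t' - (t+1)) % 2 = 0 := by
      by_contra hodd
      rw [if_neg hodd] at hrstar
      omega
    rw [if_pos hrpar] at hrstar
    -- t' = t + 2a + 1
    obtain ⟨a, ha⟩ : ∃ a, t' = t + 2*a + 1 := ⟨(t' - (t+1))/2, by omega⟩
    have hpat : ∀ u, 1 ≤ u → u ≤ a → ε (t+2*u) = 1 - ε t ∧ ε (t+2*u+1) = ε t := by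
      intro u hu1 hu2
      have hx := halt (2*u - 1) (by omega)
      have hy := halt (2*u) (by omega)
      rw [show t+1+(2*u-1) = t + 2*u by omega] at hx
      rw [show t+1+(2*u) = t + 2*u + 1 by omega] at hy
      rw [if_neg (by omega)] at hx
      rw [if_pos (by omega)] at hy
      omega
    have hend : ε (t+2*a+2) = ε t := by
      rw [show t+2*a+2 = t'+1 by omega, ← hdt', hsame]
    rcases Nat.eq_zero_or_pos (ε t) with h0 | h0
    · -- 00 defect
      exact claim00 h hp ht (by omega) h0 (by omega)
        (fun u hu1 hu2 => by have := hpat u hu1 hu2; omega)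
        (by omega)
    · exact claim11 h hp ht (by omega) (by omega) (by omega)
        (fun u hu1 hu2 => by have := hpat u hu1 hu2; omega)
        (by omega)
  constructor
  · omega
  · have hrstar := halt (t' - (t+1)) (by omega)
    rw [show t+1+(t' - (t+1)) = t' by omega] at hrstar
    rcases Nat.mod_two_eq_zero_or_one ((t' - (t+1))) with hr2 | hr2
    · rw [if_pos hr2] at hrstar; omega
    · rw [if_neg (by omega)] at hrstar; omega

/-- In a periodic ΓH-sequence with prefix 11(01)^{s-1}00, the period is even and
every defect sits at an even position. -/
lemma defects_even {ε : ℕ → ℕ} (h : GammaH ε) {s K : ℕ} (hp : PreS ε s)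
    (hK : 1 ≤ K) (hper : shift^[K] ε = ε) :
    K % 2 = 0 ∧ ∀ u, ε u = ε (u+1) → u % 2 = 0 := by
  classical
  obtain ⟨hs, he0, he1, hepre, he2s, he2s1⟩ := hp
  have hp' : PreS ε s := ⟨hs, he0, he1, hepre, he2s, he2s1⟩
  have hdef2s : ε (2*s) = ε (2*s+1) := by omega
  have main : ∀ u, 2*s ≤ u → ε u = ε (u+1) → u % 2 = 0 := by
    intro u
    induction u using Nat.strong_induction_on with
    | _ u IH =>
      intro hu hdu
      rcases eq_or_lt_of_le hu with he | hlt
      · omega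
      · set P := fun m => 2*s ≤ m ∧ ε m = ε (m+1) with hP
        have hPdec : DecidablePred P := fun m => by unfold P; infer_instance
        set t := Nat.findGreatest P (u-1) with htdef
        have hP2s : P (2*s) := ⟨le_refl _, hdef2s⟩
        have hPt : P t := Nat.findGreatest_spec (show 2*s ≤ u-1 by omega) hP2s
        have htu : t ≤ u - 1 := Nat.findGreatest_le _
        have ht2s : 2*s ≤ t := hPt.1
        have hbetween : ∀ v, t < v → v < u → ε v ≠ ε (v+1) := by
          intro v hv1 hv2 hvd
          exact Nat.findGreatest_is_greatest hv1 (by omega) ⟨by omega, hvd⟩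
        have htev : t % 2 = 0 := IH t (by omega) ht2s hPt.2
        have hguard : ε (t-1) ≠ ε t := by
          intro heq
          rcases eq_or_lt_of_le ht2s with he2 | hlt2
          · -- t = 2s : ε(2s-1) = 1 but ε(2s) = 0
            have hv : ε (2*s - 1) = 1 := by
              rcases eq_or_lt_of_le hs with hs1 | hs2
              · rw [show 2*s - 1 = 1 by omega]; exact he1
              · have := (hepre (s-1) (by omega) (by omega)).2
                rw [show 2*s-1 = 2*(s-1)+1 by omega]; exact this
            rw [← he2] at heq
            omega
          · -- defect at t-1, also ≥ 2s, so even; contradiction with t even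
            have := IH (t-1) (by omega) (by omega) (by rw [show t-1+1 = t by omega]; exact heq)
            omega
        have hstep := step_defect h hp' (by omega) hPt.2 hguard (by omega) hdu hbetween
        omega
  have hKeven : K % 2 = 0 := by
    have hd : ε (2*s + K) = ε (2*s + K + 1) := by
      have h1 := periodic_add hper (2*s)
      have h2 := periodic_add hper (2*s+1)
      rw [show 2*s+1+K = 2*s+K+1 by ring] at h2
      omega
    have := main (2*s + K) (by omega) hd
    omega
  refine ⟨hKeven, fun u hdu => ?_⟩
  have hd : ε (u + 2*s*K) = ε (u + 2*s*K + 1) := by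
    have h1 := periodic_mul_add hper (2*s) u
    have h2 := periodic_mul_add hper (2*s) (u+1)
    rw [show u+1+2*s*K = u+2*s*K+1 by ring] at h2
    omega
  have hev := main (u + 2*s*K) (by nlinarith) hd
  have he2 : 2*s*K = 2*(s*K) := by ring
  rw [he2] at hev
  omega
/-! ### Translation between ε and its doubling preimage -/

/-- Pointwise agreement transfer, plain version. -/
lemma Dop_agree {c : ℕ → ℕ} {n j : ℕ} (hn : c n = 0)
    (hag : ∀ u, u < j → c (n+1+u) = c u) :
    ∀ i, i < 2*j+1 → Dop c (2*n+2+i) = Dop c i := by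
  intro i hi
  rcases Nat.eq_zero_or_pos i with rfl | hpos
  · rw [Nat.add_zero, show 2*n+2 = 2*n+2 from rfl, Dop_even, hn, Dop_zero]
  rcases Nat.even_or_odd i with ⟨u, hu⟩ | ⟨u, hu⟩
  · have hiu : i = 2*(u-1)+2 := by omega
    subst hiu
    rw [show 2*n+2+(2*(u-1)+2) = 2*(n+1+(u-1))+2 by ring, Dop_even, Dop_even,
      hag (u-1) (by omega)]
  · have hiu : i = 2*u+1 := by omega
    subst hiu
    rw [show 2*n+2+(2*u+1) = 2*(n+1+u)+1 by ring, Dop_odd, Dop_odd, hag u (by omega)]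

/-- Pointwise agreement transfer, mirror version. -/
lemma Dop_agree_mirror {c : ℕ → ℕ} (hseq : isSeq c) {n j : ℕ} (hn : c n = 1)
    (hag : ∀ u, u < j → c (n+1+u) = 1 - c u) :
    ∀ i, i < 2*j+1 → Dop c (2*n+2+i) = 1 - Dop c i := by
  intro i hi
  rcases Nat.eq_zero_or_pos i with rfl | hpos
  · rw [Nat.add_zero, Dop_even, hn, Dop_zero]
  rcases Nat.even_or_odd i with ⟨u, hu⟩ | ⟨u, hu⟩
  · have hiu : i = 2*(u-1)+2 := by omega
    subst hiu
    rw [show 2*n+2+(2*(u-1)+2) = 2*(n+1+(u-1))+2 by ring, Dop_even, Dop_even,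
      hag (u-1) (by omega)]
  · have hiu : i = 2*u+1 := by omega
    subst hiu
    rw [show 2*n+2+(2*u+1) = 2*(n+1+u)+1 by ring, Dop_odd, Dop_odd, hag u (by omega)]

/-- Lex order transfer: σ^{n+1} c ⪯ c implies σ^{2n+2} D(c) ⪯ D(c), when cₙ = 0. -/
lemma Dop_le_transfer {c : ℕ → ℕ} {n : ℕ} (hn : c n = 0)
    (hle : lexLe (shift^[n+1] c) c) : lexLe (shift^[2*n+2] (Dop c)) (Dop c) := by
  rcases hle with ⟨j, hag, hlt⟩ | heq
  · refine Or.inl ⟨2*j+1, fun i hi => ?_, ?_⟩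
    · rw [shift_iter]
      exact Dop_agree hn (fun u hu => by have := hag u hu; rwa [shift_iter] at this) i hi
    · rw [shift_iter] at hlt ⊢
      rw [show 2*n+2+(2*j+1) = 2*(n+1+j)+1 by ring, Dop_odd, Dop_odd]
      exact hlt
  · refine Or.inr (funext fun i => ?_)
    rw [shift_iter]
    have heq' : ∀ u, c (n+1+u) = c u := fun u => by
      conv_rhs => rw [← heq]
      rw [shift_iter]
    exact Dop_agree (j := i+1) hn (fun u _ => heq' u) i (by omega)

/-- Lex order transfer, mirror side: mirror c ⪯ σ^{n+1} c implies
mirror D(c) ⪯ σ^{2n+2} D(c), when cₙ = 1. -/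
lemma Dop_ge_transfer {c : ℕ → ℕ} (hseq : isSeq c) {n : ℕ} (hn : c n = 1)
    (hge : lexLe (mirror c) (shift^[n+1] c)) :
    lexLe (mirror (Dop c)) (shift^[2*n+2] (Dop c)) := by
  rcases hge with ⟨j, hag, hlt⟩ | heq
  · refine Or.inl ⟨2*j+1, fun i hi => ?_, ?_⟩
    · rw [shift_iter, mirror]
      have := Dop_agree_mirror hseq hn (fun u hu => by
        have h2 := hag u hu; rw [shift_iter] at h2; rw [← h2]; rfl) i hi
      omega
    · have h1 : mirror (Dop c) (2*j+1) = 1 - c j := by rw [mirror, Dop_odd]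
      have h2 : (shift^[2*n+2] (Dop c)) (2*j+1) = c (n+1+j) := by
        rw [shift_iter, show 2*n+2+(2*j+1) = 2*(n+1+j)+1 by ring, Dop_odd]
      rw [h1, h2]
      rw [shift_iter, mirror] at hlt
      exact hlt
  · -- mirror c = σ^{n+1} c : then mirror D(c) = σ^{2n+2} D(c)
    refine Or.inr (funext fun i => ?_)
    rw [shift_iter, mirror]
    have heq' : ∀ u, c (n+1+u) = 1 - c u := fun u => by
      have : mirror c u = (shift^[n+1] c) u := by rw [heq]
      rw [shift_iter] at this
      rw [← this]; rfl
    have := Dop_agree_mirror (j := i+1) hseq hn (fun u _ => heq' u) i (by omega)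
    omega

/-- The two "automatic" comparisons for D-images, plus low shifts. -/
lemma Dop_lt_of_head0 {b : ℕ → ℕ} {m : ℕ} (hb0 : b 0 = 1) (hm : b m = 0) :
    lexLe (shift^[m] b) b :=
  Or.inl ⟨0, fun j hj => absurd hj (by omega), by rw [shift_iter, Nat.add_zero, hm, hb0]; omega⟩

lemma Dop_gt_of_head1 {b : ℕ → ℕ} {m : ℕ} (hb0 : b 0 = 1) (hm : b m = 1) :
    lexLe (mirror b) (shift^[m] b) :=
  Or.inl ⟨0, fun j hj => absurd hj (by omega),
    by rw [shift_iter, Nat.add_zero, hm, mirror, hb0]; omega⟩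
/-! ### Strict transfers, Γ-preservation, period transfer, and Lemma L -/

lemma Dop_lt_transfer {c : ℕ → ℕ} {n : ℕ} (hn : c n = 0)
    (hlt : lexLt c (shift^[n+1] c)) : lexLt (Dop c) (shift^[2*n+2] (Dop c)) := by
  obtain ⟨j, hag, hj⟩ := hlt
  refine ⟨2*j+1, fun i hi => ?_, ?_⟩
  · rw [shift_iter]
    refine (Dop_agree hn (fun u hu => ?_) i hi).symm
    have h2 := hag u hu
    rw [shift_iter] at h2
    exact h2.symm
  · rw [shift_iter] at hj ⊢
    rw [show 2*n+2+(2*j+1) = 2*(n+1+j)+1 by ring, Dop_odd, Dop_odd]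
    exact hj

lemma Dop_gt_transfer {c : ℕ → ℕ} (hseq : isSeq c) {n : ℕ} (hn : c n = 1)
    (hlt : lexLt (shift^[n+1] c) (mirror c)) :
    lexLt (shift^[2*n+2] (Dop c)) (mirror (Dop c)) := by
  obtain ⟨j, hag, hj⟩ := hlt
  refine ⟨2*j+1, fun i hi => ?_, ?_⟩
  · rw [shift_iter, mirror]
    have := Dop_agree_mirror hseq hn (fun u hu => by
      have h2 := hag u hu; rw [shift_iter, mirror] at h2; omega) i hi
    omega
  · rw [shift_iter, mirror] at hj ⊢
    rw [show 2*n+2+(2*j+1) = 2*(n+1+j)+1 by ring, Dop_odd, Dop_odd]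
    exact hj

/-- D preserves Γ. -/
lemma Gamma_Dop {c : ℕ → ℕ} (hc : Gamma c) : Gamma (Dop c) := by
  have hseq := hc.1
  have hc0 := Gamma_zero_one hc
  have hb0 : Dop c 0 = 1 := rfl
  have hbseq : isSeq (Dop c) := isSeq_Dop hseq
  refine ⟨hbseq, fun k => ?_⟩
  rcases Nat.eq_zero_or_pos k with rfl | hk
  · exact ⟨Dop_gt_of_head1 hb0 hb0, Or.inr (by simp)⟩
  rcases Nat.even_or_odd k with ⟨u, hu⟩ | ⟨u, hu⟩
  · -- k = 2u = 2(u-1)+2, u ≥ 1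
    have hk2 : k = 2*(u-1)+2 := by omega
    subst hk2
    rcases GammaH_val_cases (Gamma_to_GammaH hc) (u-1) with h0 | h1
    · constructor
      · refine Dop_gt_of_head1 hb0 ?_
        rw [Dop_even, h0]
      · exact Dop_le_transfer h0 (hc.2 (u-1+1)).2
    · constructor
      · exact Dop_ge_transfer hseq h1 (hc.2 (u-1+1)).1
      · refine Dop_lt_of_head0 hb0 ?_
        rw [Dop_even, h1]
  · -- k = 2u+1
    subst hu
    rcases GammaH_val_cases (Gamma_to_GammaH hc) u with h0 | h1
    · constructor
      · refine Or.inl ⟨1, fun j hj => ?_, ?_⟩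
        · interval_cases j
          rw [shift_iter, mirror, Nat.add_zero, Dop_odd, hb0, h0]
        · rw [shift_iter, mirror, show 2*u+1+1 = 2*u+2 by ring, Dop_even, h0]
          have : Dop c 1 = c 0 := by rw [show (1:ℕ) = 2*0+1 by ring, Dop_odd]
          rw [this, hc0]
          omega
      · refine Dop_lt_of_head0 hb0 ?_
        rw [Dop_odd, h0]
    · constructor
      · refine Dop_gt_of_head1 hb0 ?_
        rw [Dop_odd, h1]
      · refine Or.inl ⟨1, fun j hj => ?_, ?_⟩
        · interval_cases j
          rw [shift_iter, Nat.add_zero, Dop_odd, hb0, h1]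
        · rw [shift_iter, show 2*u+1+1 = 2*u+2 by ring, Dop_even, h1]
          have : Dop c 1 = c 0 := by rw [show (1:ℕ) = 2*0+1 by ring, Dop_odd]
          rw [this, hc0]
          omega

/-- Periods valid on positive indices are multiples of the smallest period. -/
lemma per_pos {ε : ℕ → ℕ} {K p : ℕ} (hK : periodicSmallest K ε) (hp : 1 ≤ p)
    (h : ∀ i, 1 ≤ i → ε (i + p) = ε i) : K ∣ p := by
  set S : ℕ → Prop := fun q => ∀ i, 1 ≤ i → ε (i + q) = ε i with hS
  have hSmul : ∀ q, S q → ∀ t i, 1 ≤ i → ε (i + t * q) = ε i := by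
    intro q hq t
    induction t with
    | zero => intro i _; simp
    | succ t ih =>
      intro i hi
      have e : i + (t+1) * q = (i + t * q) + q := by ring
      rw [e, hq _ (by omega), ih i hi]
  have hgcd : ∀ p q, S p → S q → S (Nat.gcd p q) := by
    intro p
    induction p using Nat.strong_induction_on with
    | _ p IH =>
      intro q hSp hSq
      rcases Nat.eq_zero_or_pos p with rfl | hppos
      · simpa using hSq
      · rw [Nat.gcd_rec p q]
        refine IH (q % p) (Nat.mod_lt _ hppos) p ?_ hSp
        intro i hi
        have h1 : ε (i + q % p + (q / p) * p) = ε (i + q % p) :=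
          hSmul p hSp (q / p) _ (by omega)
        have h2 : i + q % p + (q / p) * p = i + q := by
          have := Nat.mod_add_div' q p
          omega
        rw [h2] at h1
        rw [← h1, hSq i hi]
  have hSK : S K := fun i _ => periodic_add hK.2.1 i
  have hSp : S p := h
  have hg := hgcd K p hSK hSp
  set g := Nat.gcd K p with hgdef
  have hgpos : 1 ≤ g := Nat.gcd_pos_of_pos_right _ (show 0 < p by omega)
  have hmul : ∀ t, 1 ≤ t → ε (g * t) = ε g := by
    intro t ht
    induction t with
    | zero => omega
    | succ t ih =>
      rcases Nat.eq_zero_or_pos t with rfl | htpos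
      · simp
      · have e : g * (t+1) = g * t + g := by ring
        rw [e, hg _ (Nat.mul_pos (show 0 < g by omega) htpos), ih htpos]
  have hKg : g ∣ K := Nat.gcd_dvd_left _ _
  have hεK : ε K = ε 0 := by
    have := periodic_add hK.2.1 0
    simpa using this
  have hεg : ε g = ε 0 := by
    obtain ⟨t, ht⟩ := hKg
    have htpos : 1 ≤ t := by
      rcases Nat.eq_zero_or_pos t with rfl | h2
      · exfalso; simp at ht; have := hK.1; omega
      · exact h2
    have := hmul t htpos
    rw [← ht] at this
    rw [← this, hεK]
  have hgper : shift^[g] ε = ε := by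
    funext i
    rw [shift_iter]
    rcases Nat.eq_zero_or_pos i with rfl | hi
    · rw [Nat.add_zero, ← hεg]
    · rw [Nat.add_comm g i, hg i hi]
  have hKle : ¬ (g < K) := fun hlt => hK.2.2 g hgpos hlt hgper
  have : g = K := by
    have := Nat.le_of_dvd (by have := hK.1; omega) hKg
    omega
  rw [← this]
  exact Nat.gcd_dvd_right _ _

/-- D doubles the smallest period (when the input word ends in 0). -/
lemma Dop_periodicSmallest {c : ℕ → ℕ} (hc0 : c 0 = 1) {κ : ℕ}
    (hlast : c (κ - 1) = 0) (hp : periodicSmallest κ c) :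
    periodicSmallest (2*κ) (Dop c) := by
  obtain ⟨hκ, hper, hsm⟩ := hp
  refine ⟨by omega, ?_, ?_⟩
  · funext i
    rw [shift_iter]
    rcases Nat.eq_zero_or_pos i with rfl | hi
    · rw [Nat.add_zero, show 2*κ = 2*(κ-1)+2 by omega, Dop_even, hlast, Dop_zero]
    rcases Nat.even_or_odd i with ⟨u, hu⟩ | ⟨u, hu⟩
    · have hiu : i = 2*(u-1)+2 := by omega
      subst hiu
      rw [show 2*κ+(2*(u-1)+2) = 2*(κ+(u-1))+2 by ring, Dop_even, Dop_even]
      have := periodic_add hper (u-1)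
      rw [show u-1+κ = κ+(u-1) by ring] at this
      rw [this]
    · have hiu : i = 2*u+1 := by omega
      subst hiu
      rw [show 2*κ+(2*u+1) = 2*(κ+u)+1 by ring, Dop_odd, Dop_odd]
      have := periodic_add hper u
      rw [show u+κ = κ+u by ring] at this
      rw [this]
  · intro m hm1 hm2 hmeq
    rcases Nat.even_or_odd m with ⟨u, hu⟩ | ⟨u, hu⟩
    · -- even m = 2u: c would have period u < κ
      have hiu : m = 2*u := by omega
      subst hiu
      have hcu : shift^[u] c = c := by
        funext i
        rw [shift_iter]
        have h1 : Dop c (2*i+1 + 2*u) = Dop c (2*i+1) := by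
          conv_rhs => rw [← hmeq]
          rw [shift_iter, Nat.add_comm (2*u) (2*i+1)]
        rw [show 2*i+1+2*u = 2*(u+i)+1 by ring, Dop_odd, Dop_odd] at h1
        exact h1
      exact hsm u (by omega) (by omega) hcu
    · -- odd m: impossible, defect at 0 would move to odd position
      have h1 : Dop c m = Dop c 0 := by
        conv_rhs => rw [← hmeq]
        rw [shift_iter, Nat.add_zero]
      have h2 : Dop c (m+1) = Dop c 1 := by
        conv_rhs => rw [← hmeq]
        rw [shift_iter, Nat.add_comm m 1]
      have hb1 : Dop c 1 = c 0 := by rw [show (1:ℕ) = 2*0+1 by ring, Dop_odd]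
      have hmu : m = 2*u+1 := hu
      subst hmu
      rw [Dop_odd] at h1
      rw [show 2*u+1+1 = 2*u+2 by ring, Dop_even] at h2
      rw [hb1, hc0] at h2
      rw [Dop_zero] at h1
      omega
/-! ### The dichotomy below Λ and Lemma L -/

lemma lam_zero : lam 0 = 1 := rfl

lemma lt_lam_cases {ε : ℕ → ℕ} (h : GammaH ε) (hlt : lexLt ε lam) :
    ε = ten ∨ ∃ s, PreS ε s := by
  obtain ⟨d, hag, hd⟩ := hlt
  have hld : lam d = 1 := by
    have := isSeq_lam d
    omega
  have hεd : ε d = 0 := by omega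
  have hd0 : d ≠ 0 := by
    intro h0
    subst h0
    rw [h.2.1] at hεd
    omega
  have hdodd : d % 2 = 1 := by
    rw [lam_val] at hld
    rw [if_neg hd0] at hld
    exact hld
  rcases eq_or_lt_of_le (show 1 ≤ d by omega) with h1 | h1
  · left
    exact GammaH_ten h (by rw [← h1] at hεd; exact hεd)
  · right
    obtain ⟨s, hs⟩ : ∃ s, d = 2*s+1 := ⟨d/2, by omega⟩
    subst hs
    have hs1 : 1 ≤ s := by omega
    refine ⟨s, hs1, h.2.1, ?_, ?_, ?_, hεd⟩
    · have := hag 1 (by omega)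
      rw [lam_val, if_neg (by omega)] at this
      simpa using this
    · intro u hu1 hu2
      constructor
      · have := hag (2*u) (by omega)
        rw [lam_val, if_neg (by omega)] at this
        rw [this]
        omega
      · have := hag (2*u+1) (by omega)
        rw [lam_val, if_neg (by omega)] at this
        rw [this]
        omega
    · have := hag (2*s) (by omega)
      rw [lam_val, if_neg (by omega)] at this
      rw [this]
      omega

/-- Lemma L: a periodic ΓH-sequence strictly below Λ is (10)^∞ or a doubling. -/
lemma lemL {ε : ℕ → ℕ} {K : ℕ} (h : GammaH ε) (hper : periodicSmallest K ε)
    (hlt : lexLt ε lam) :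
    ε = ten ∨ (K % 2 = 0 ∧ 2 ≤ K ∧
      ∃ c, ε = Dop c ∧ GammaH c ∧ periodicSmallest (K/2) c) := by
  rcases lt_lam_cases h hlt with hten | ⟨s, hp⟩
  · exact Or.inl hten
  right
  obtain ⟨hKev, hdef⟩ := defects_even h hp hper.1 hper.2.1
  have hseq := h.1
  -- pair structure
  have hpair : ∀ j, ε (2*j+2) = 1 - ε (2*j+1) := by
    intro j
    have hne : ε (2*j+1) ≠ ε (2*j+1+1) := by
      intro heq
      have := hdef (2*j+1) heq
      omega
    rw [show 2*j+1+1 = 2*j+2 by ring] at hne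
    have h1 := hseq (2*j+1)
    have h2 := hseq (2*j+2)
    omega
  have hK2 : 2 ≤ K := by
    have := hper.1
    omega
  set c : ℕ → ℕ := fun j => ε (2*j+1) with hcdef
  have hDop : ε = Dop c := by
    funext n
    rcases Nat.eq_zero_or_pos n with rfl | hn
    · rw [Dop_zero, h.2.1]
    rcases Nat.even_or_odd n with ⟨u, hu⟩ | ⟨u, hu⟩
    · have hnu : n = 2*(u-1)+2 := by omega
      subst hnu
      rw [Dop_even, hpair (u-1)]
    · have hnu : n = 2*u+1 := by omega
      subst hnu
      rw [Dop_odd]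
  refine ⟨hKev, hK2, c, hDop, ?_, ?_⟩
  · -- GammaH c
    have hc0 : c 0 = 1 := by
      show ε (2*0+1) = 1
      simpa using hp.2.2.1
    refine ⟨fun j => hseq (2*j+1), hc0, fun n => ⟨?_, ?_⟩⟩
    · intro hn0
      by_contra hco
      have hlt2 := lexLt_of_not_le hco
      have hεle : lexLe (shift^[2*n+2] ε) ε := by
        have := (h.2.2 (2*n+1)).1 hn0
        rwa [show 2*n+1+1 = 2*n+2 by ring] at this
      have := Dop_lt_transfer hn0 hlt2
      rw [← hDop] at this
      exact lexLt_not_le this hεle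
    · intro hn1
      by_contra hco
      have hlt2 := lexLt_of_not_le hco
      have hεge : lexLe (mirror ε) (shift^[2*n+2] ε) := by
        have := (h.2.2 (2*n+1)).2 hn1
        rwa [show 2*n+1+1 = 2*n+2 by ring] at this
      have := Dop_gt_transfer (fun j => hseq (2*j+1)) hn1 hlt2
      rw [← hDop] at this
      exact lexLt_not_le this hεge
  · -- periodicSmallest (K/2) c
    refine ⟨by omega, ?_, ?_⟩
    · funext u
      rw [shift_iter]
      show ε (2*(K/2+u)+1) = ε (2*u+1)
      have := periodic_add hper.2.1 (2*u+1)
      rw [show 2*u+1+K = 2*(K/2+u)+1 by omega] at this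
      exact this
    · intro m hm1 hm2 hmeq
      have hpos : ∀ i, 1 ≤ i → ε (i + 2*m) = ε i := by
        intro i hi
        rcases Nat.even_or_odd i with ⟨u, hu⟩ | ⟨u, hu⟩
        · have hiu : i = 2*(u-1)+2 := by omega
          subst hiu
          rw [show 2*(u-1)+2+2*m = 2*((u-1)+m)+2 by ring, hpair, hpair]
          have : c ((u-1) + m) = c (u-1) := by
            have := congrFun hmeq (u-1)
            rw [shift_iter] at this
            rw [show (u-1)+m = m+(u-1) by ring]
            exact this
          have h9 : ε (2*((u-1)+m)+1) = ε (2*(u-1)+1) := this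
          rw [h9]
        · have hiu : i = 2*u+1 := by omega
          subst hiu
          rw [show 2*u+1+2*m = 2*(u+m)+1 by ring]
          have := congrFun hmeq u
          rw [shift_iter] at this
          show ε (2*(u+m)+1) = ε (2*u+1)
          rw [show u+m = m+u by ring]
          exact this
      have hdvd := per_pos hper (show 1 ≤ 2*m by omega) hpos
      have := Nat.le_of_dvd (by omega) hdvd
      omega
/-! ### Γ-membership and smallest periods of the building blocks -/

lemma Ew_period {r : ℕ} (hr : 1 ≤ r) : shift^[r] (Ew r) = Ew r := by
  funext n
  rw [shift_iter]
  simp only [Ew]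
  rw [Nat.add_mod_left r n]

lemma Ew_shift_mod {r : ℕ} (hr : 1 ≤ r) (k : ℕ) :
    shift^[k] (Ew r) = shift^[k % r] (Ew r) := by
  conv_lhs => rw [← Nat.mod_add_div' k r]
  rw [Function.iterate_add_apply, shift_iter_mul (Ew_period hr)]

lemma Ew_zero {r : ℕ} : Ew r 0 = 1 := by
  simp only [Ew]
  rw [if_pos (Nat.zero_mod r)]

lemma Ew_small {r n : ℕ} (hn : n < r) (h0 : n ≠ 0) : Ew r n = n % 2 := by
  simp only [Ew]
  rw [Nat.mod_eq_of_lt hn, if_neg h0]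

lemma Ew_mult {r n : ℕ} (h : n % r = 0) : Ew r n = 1 := by
  simp only [Ew]
  rw [if_pos h]

lemma Gamma_Ew {r : ℕ} (hr : 3 ≤ r) (hodd : r % 2 = 1) : Gamma (Ew r) := by
  refine ⟨isSeq_Ew r, fun k => ?_⟩
  obtain ⟨t, ht, hform⟩ : ∃ t, t < r ∧ shift^[k] (Ew r) = shift^[t] (Ew r) :=
    ⟨k % r, Nat.mod_lt _ (by omega), Ew_shift_mod (by omega) k⟩
  rw [hform]
  have hE0 : Ew r 0 = 1 := Ew_zero
  have hE1 : Ew r 1 = 1 := by rw [Ew_small (by omega) (by omega)]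
  rcases Nat.eq_zero_or_pos t with ht0 | htpos
  · rw [ht0]
    constructor
    · exact Or.inl ⟨0, fun j hj => absurd hj (by omega), by
        simp only [Function.iterate_zero, id_eq, mirror]
        rw [hE0]; omega⟩
    · exact Or.inr (by simp)
  rcases Nat.even_or_odd t with ⟨u, hu⟩ | ⟨u, hu⟩
  · -- t even, 2 ≤ t ≤ r-1 : shift starts with 0
    have hEt : Ew r t = 0 := by rw [Ew_small ht (by omega)]; omega
    constructor
    · -- mirror ⪯ σ^t : first diff at 1
      refine Or.inl ⟨1, fun j hj => ?_, ?_⟩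
      · interval_cases j
        rw [shift_iter, Nat.add_zero, mirror, hE0, hEt]
      · rw [shift_iter, mirror, hE1]
        have hEt1 : Ew r (t+1) = 1 := by
          rcases eq_or_lt_of_le (show t+1 ≤ r by omega) with he | hlt
          · exact Ew_mult (by rw [he, Nat.mod_self])
          · rw [Ew_small hlt (by omega)]; omega
        rw [hEt1]
        omega
    · exact Or.inl ⟨0, fun j hj => absurd hj (by omega), by
        rw [shift_iter, Nat.add_zero, hEt, hE0]; omega⟩
  · -- t odd, 1 ≤ t ≤ r-2 : shift starts with 1 0
    have hEt : Ew r t = 1 := by rw [Ew_small ht (by omega)]; omega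
    have hEt1 : Ew r (t+1) = 0 := by
      rw [Ew_small (show t+1 < r by omega) (by omega)]; omega
    constructor
    · exact Or.inl ⟨0, fun j hj => absurd hj (by omega), by
        rw [shift_iter, Nat.add_zero, mirror, hE0, hEt]; omega⟩
    · refine Or.inl ⟨1, fun j hj => ?_, ?_⟩
      · interval_cases j
        rw [shift_iter, Nat.add_zero, hEt, hE0]
      · rw [shift_iter, hEt1, hE1]
        omega

lemma periodicSmallest_Ew {r : ℕ} (hr : 3 ≤ r) (hodd : r % 2 = 1) :
    periodicSmallest r (Ew r) := by
  refine ⟨by omega, Ew_period (by omega), ?_⟩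
  intro j hj1 hj2 heq
  have hE1 : Ew r 1 = 1 := by rw [Ew_small (by omega) (by omega)]
  have hE0 : Ew r 0 = 1 := Ew_zero
  rcases Nat.even_or_odd j with ⟨u, hu⟩ | ⟨u, hu⟩
  · have h0 := congrFun heq 0
    rw [shift_iter, Nat.add_zero] at h0
    have : Ew r j = 0 := by rw [Ew_small hj2 (by omega)]; omega
    omega
  · have h0 := congrFun heq 1
    rw [shift_iter] at h0
    have : Ew r (j+1) = 0 := by
      rw [Ew_small (show j+1 < r by omega) (by omega)]; omega
    omega

lemma ten_period : shift^[2] ten = ten := by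
  funext n
  rw [shift_iter]
  simp only [ten]
  omega

lemma mirror_ten_shift : mirror ten = shift^[1] ten := by
  funext n
  rw [shift_iter]
  simp only [mirror, ten]
  omega

lemma Gamma_ten : Gamma ten := by
  refine ⟨isSeq_ten, fun k => ?_⟩
  have hmod : shift^[k] ten = shift^[k % 2] ten := by
    conv_lhs => rw [← Nat.mod_add_div' k 2]
    rw [Function.iterate_add_apply, shift_iter_mul ten_period]
  rw [hmod]
  rcases Nat.mod_two_eq_zero_or_one k with h | h
  · rw [h]
    simp only [Function.iterate_zero, id_eq]
    constructor
    · exact Or.inl ⟨0, fun j hj => absurd hj (by omega), by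
        simp only [mirror, ten]; omega⟩
    · exact Or.inr rfl
  · rw [h]
    constructor
    · exact Or.inr mirror_ten_shift
    · exact Or.inl ⟨0, fun j hj => absurd hj (by omega), by
        rw [shift_iter]; simp only [ten]; omega⟩

lemma periodicSmallest_ten : periodicSmallest 2 ten := by
  refine ⟨by omega, ten_period, ?_⟩
  intro j hj1 hj2 heq
  have : j = 1 := by omega
  subst this
  have h0 := congrFun heq 0
  rw [shift_iter] at h0
  simp only [ten] at h0
  omega

/-! ### Unfolding the recursive definition of AA -/

lemma AA_odd {k : ℕ} (h : k % 2 = 1) : AA k = Ew k := by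
  rw [AA]
  rw [if_pos h]

lemma AA_two : AA 2 = ten := by
  rw [AA]
  norm_num

lemma AA_even {k : ℕ} (h : k % 2 = 0) (h3 : 3 ≤ k) : AA k = Dop (AA (k / 2)) := by
  rw [AA]
  rw [if_neg (by omega), if_neg (by omega)]

/-- Fundamental properties of AA k, k ≥ 2. -/
lemma AA_props : ∀ k, 2 ≤ k →
    Gamma (AA k) ∧ periodicSmallest k (AA k) ∧ AA k 0 = 1 ∧ AA k (k-1) = 0 := by
  intro k
  induction k using Nat.strong_induction_on with
  | _ k IH =>
    intro hk
    rcases Nat.mod_two_eq_zero_or_one k with hev | hodd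
    · rcases eq_or_lt_of_le hk with h2 | h3
      · rw [← h2, AA_two]
        exact ⟨Gamma_ten, periodicSmallest_ten, rfl, rfl⟩
      · have h4 : 4 ≤ k := by omega
        rw [AA_even hev (by omega)]
        obtain ⟨hg, hp, h0, hl⟩ := IH (k/2) (by omega) (by omega)
        refine ⟨Gamma_Dop hg, ?_, rfl, ?_⟩
        · have := Dop_periodicSmallest h0 hl hp
          rwa [show 2*(k/2) = k by omega] at this
        · rw [show k-1 = 2*(k/2-1)+1 by omega, Dop_odd]
          exact hl
    · have h3 : 3 ≤ k := by omega
      rw [AA_odd hodd]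
      refine ⟨Gamma_Ew h3 hodd, periodicSmallest_Ew h3 hodd, Ew_zero, ?_⟩
      rw [Ew_small (show k-1 < k by omega) (by omega)]
      omega
/-! ### Order lemmas for Dop and Λ, and minimality of AA k -/

lemma Dop_mono_lt {x y : ℕ → ℕ} (h : lexLt x y) : lexLt (Dop x) (Dop y) := by
  obtain ⟨k, hag, hk⟩ := h
  refine ⟨2*k+1, fun j hj => ?_, ?_⟩
  · rcases Nat.eq_zero_or_pos j with rfl | hpos
    · rfl
    rcases Nat.even_or_odd j with ⟨u, hu⟩ | ⟨u, hu⟩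
    · rw [show j = 2*(u-1)+2 by omega, Dop_even, Dop_even, hag (u-1) (by omega)]
    · rw [show j = 2*u+1 by omega, Dop_odd, Dop_odd, hag u (by omega)]
  · rw [Dop_odd, Dop_odd]
    exact hk

lemma Dop_mono_le {x y : ℕ → ℕ} (h : lexLe x y) : lexLe (Dop x) (Dop y) := by
  rcases h with h | rfl
  · exact Or.inl (Dop_mono_lt h)
  · exact lexLe_refl _

lemma le_oneS {x : ℕ → ℕ} (hx : isSeq x) : lexLe x oneS := by
  rcases lex_total x oneS with h | h
  · exact h
  · obtain ⟨k, _, hk⟩ := h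
    have := hx k
    simp only [oneS] at hk
    omega

lemma Dop_le_lam {x : ℕ → ℕ} (hx : isSeq x) : lexLe (Dop x) lam :=
  Dop_mono_le (le_oneS hx)

lemma lam_one : lam 1 = 1 := by rw [lam_val]; norm_num
lemma lam_two : lam 2 = 0 := by rw [lam_val]; norm_num

lemma ten_lt_lam : lexLt ten lam := by
  refine ⟨1, fun j hj => ?_, ?_⟩
  · interval_cases j
    rw [lam_val]
    norm_num [ten]
  · rw [lam_one]
    norm_num [ten]

lemma ten_lt_head11 {x : ℕ → ℕ} (h0 : x 0 = 1) (h1 : x 1 = 1) : lexLt ten x := by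
  refine ⟨1, fun j hj => ?_, ?_⟩
  · interval_cases j
    rw [h0]; norm_num [ten]
  · rw [h1]; norm_num [ten]

lemma Dop_one : Dop c 1 = c 0 := by rw [show (1:ℕ) = 2*0+1 by ring, Dop_odd]

lemma ten_lt_Dop {c : ℕ → ℕ} (hc0 : c 0 = 1) : lexLt ten (Dop c) :=
  ten_lt_head11 rfl (by rw [Dop_one, hc0])

lemma lam_not_periodic {K : ℕ} (hK : 1 ≤ K) : shift^[K] lam ≠ lam := by
  intro h
  rcases Nat.mod_two_eq_zero_or_one K with he | ho
  · have h0 := congrFun h 0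
    rw [shift_iter, Nat.add_zero] at h0
    rw [lam_val, if_neg (by omega)] at h0
    rw [lam_val, if_pos rfl] at h0
    omega
  · have h0 := congrFun h 2
    rw [shift_iter] at h0
    rw [lam_val, if_neg (by omega)] at h0
    rw [lam_two] at h0
    omega

lemma periodicSmallest_unique {ε : ℕ → ℕ} {k k' : ℕ} (h : periodicSmallest k ε)
    (h' : periodicSmallest k' ε) : k = k' :=
  Nat.dvd_antisymm (smallest_period_dvd h h'.2.1) (smallest_period_dvd h' h.2.1)

lemma Ew_eq_lam_below {r j : ℕ} (hr : 3 ≤ r) (hodd : r % 2 = 1) (hj : j ≤ r) :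
    Ew r j = lam j := by
  rcases Nat.eq_zero_or_pos j with rfl | hpos
  · rw [Ew_zero, lam_val]
    norm_num
  rcases eq_or_lt_of_le hj with he | hlt
  · rw [he, Ew_mult (Nat.mod_self r), lam_val, if_neg (by omega)]
    omega
  · rw [Ew_small hlt (by omega), lam_val, if_neg (by omega)]

lemma Ew_mod {r n : ℕ} (hr : 1 ≤ r) : Ew r n = Ew r (n % r) := by
  simp only [Ew]
  rw [Nat.mod_eq_of_lt (Nat.mod_lt _ (by omega))]

/-- Minimality: AA k is the lexicographically least periodic ΓH-sequence of
smallest period k. -/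
lemma AA_min : ∀ k, 2 ≤ k → ∀ ε, GammaH ε → periodicSmallest k ε → lexLe (AA k) ε := by
  intro k
  induction k using Nat.strong_induction_on with
  | _ k IH =>
    intro hk ε hG hper
    have hseq := hG.1
    rcases lex_total lam ε with hle | hlt
    · rcases hle with hlt2 | heq
      · rcases Nat.mod_two_eq_zero_or_one k with hev | hodd
        · -- k even: AA k ⪯ lam ≺ ε
          have h1 : lexLe (AA k) lam := by
            rcases eq_or_lt_of_le hk with h2 | h3
            · rw [← h2, AA_two]; exact Or.inl ten_lt_lam
            · rw [AA_even hev (by omega)]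
              exact Dop_le_lam (AA_props (k/2) (by omega)).1.1
          exact Or.inl (lexLt_of_le_of_lt h1 hlt2)
        · -- k odd ≥ 3
          have h3 : 3 ≤ k := by omega
          rw [AA_odd hodd]
          obtain ⟨d, hag, hd⟩ := hlt2
          have hld : lam d = 0 := by
            have h5 := isSeq_lam d
            have h6 := hseq d
            omega
          have hεd : ε d = 1 := by
            have h6 := hseq d
            omega
          have hd0 : d ≠ 0 := by
            intro h7
            subst h7
            rw [lam_val] at hld
            simp at hld
          have hdev : d % 2 = 0 := by
            rw [lam_val, if_neg hd0] at hld
            exact hld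
          rcases le_or_gt d k with hdk | hdk
          · -- d ≤ k : strict at d
            have hdk' : d < k := by omega
            refine Or.inl ⟨d, fun j hj => ?_, ?_⟩
            · rw [Ew_eq_lam_below h3 hodd (by omega)]
              exact hag j hj
            · rw [Ew_small hdk' hd0, hεd]
              omega
          · rcases eq_or_lt_of_le (show k+1 ≤ d by omega) with he | hlt3
            · -- d = k+1 : ε = Ew k
              refine Or.inr (funext fun n => ?_)
              rw [Ew_mod (show 1 ≤ k by omega), periodic_mod (by omega) hper.2.1 n]
              rw [Ew_eq_lam_below h3 hodd (le_of_lt (Nat.mod_lt n (show 0 < k by omega)))]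
              have h9 := hag (n % k)
                (show n % k < d by have := Nat.mod_lt n (show 0 < k by omega); omega)
              exact h9
            · -- d ≥ k+2 : contradiction via ε (k+1) = ε 1
              exfalso
              have h5 : ε 1 = lam 1 := (hag 1 (by omega)).symm
              have h6 : ε (k+1) = lam (k+1) := (hag (k+1) (by omega)).symm
              have h7 : ε (1 + k) = ε 1 := periodic_add hper.2.1 1
              rw [show 1+k = k+1 by ring] at h7
              rw [lam_one] at h5
              rw [lam_val, if_neg (by omega)] at h6
              omega
      · exfalso
        exact lam_not_periodic hper.1 (by rw [heq]; exact hper.2.1)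
    · -- ε ≺ lam
      rcases lemL hG hper hlt with hten | ⟨hKev, hK2', c, hDc, hGc, hpc⟩
      · subst hten
        have : k = 2 := periodicSmallest_unique hper periodicSmallest_ten
        rw [this, AA_two]
        exact lexLe_refl _
      · rcases eq_or_lt_of_le hk with h2 | h3
        · rw [← h2, AA_two, hDc]
          exact Or.inl (ten_lt_Dop hGc.2.1)
        · have hev : k % 2 = 0 := hKev
          have hh := IH (k/2) (by omega) (by omega) c hGc hpc
          rw [AA_even hev (by omega), hDc]
          exact Dop_mono_le hh
/-! ### Closed forms for AA and comparison lemmas -/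

lemma AA_pow_odd (p : ℕ) (hp : 1 ≤ p) :
    ∀ i, AA (2^i * (2*p+1)) = Dop^[i] (Ew (2*p+1)) := by
  intro i
  induction i with
  | zero =>
    simp only [pow_zero, one_mul, Function.iterate_zero, id_eq]
    exact AA_odd (by omega)
  | succ i ih =>
    have hpos : 1 ≤ 2^i := Nat.one_le_two_pow
    have hx3 : 2*p+1 ≤ 2^i * (2*p+1) := Nat.le_mul_of_pos_left _ (by omega)
    have hform : 2^(i+1) * (2*p+1) = 2 * (2^i * (2*p+1)) := by ring
    rw [hform, AA_even (by omega) (by omega),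
      Nat.mul_div_cancel_left _ (by norm_num), ih, Function.iterate_succ_apply']

lemma AA_pow2 : ∀ i, 1 ≤ i → AA (2^i) = Dop^[i-1] ten := by
  intro i
  induction i with
  | zero => omega
  | succ i ih =>
    intro _
    rcases Nat.eq_zero_or_pos i with rfl | hi
    · simpa using AA_two
    · have hpos : 2 ≤ 2^i := by
        calc 2 = 2^1 := by norm_num
        _ ≤ 2^i := Nat.pow_le_pow_right (by norm_num) hi
      have hform : 2^(i+1) = 2 * 2^i := by ring
      rw [hform, AA_even (by omega) (by omega),
        Nat.mul_div_cancel_left _ (by norm_num), ih hi,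
        show i + 1 - 1 = (i-1) + 1 by omega, Function.iterate_succ_apply']

lemma isSeq_DopIter {x : ℕ → ℕ} (hx : isSeq x) (i : ℕ) : isSeq (Dop^[i] x) := by
  induction i with
  | zero => simpa using hx
  | succ i ih => rw [Function.iterate_succ_apply']; exact isSeq_Dop ih

lemma DopIter_head {x : ℕ → ℕ} (hx : x 0 = 1) (i : ℕ) : (Dop^[i] x) 0 = 1 := by
  induction i with
  | zero => simpa using hx
  | succ i ih => rw [Function.iterate_succ_apply']; rfl

lemma DopIter_mono_lt {x y : ℕ → ℕ} (h : lexLt x y) (i : ℕ) :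
    lexLt (Dop^[i] x) (Dop^[i] y) := by
  induction i with
  | zero => simpa using h
  | succ i ih =>
    rw [Function.iterate_succ_apply', Function.iterate_succ_apply']
    exact Dop_mono_lt ih

lemma ten_lt_DopIter {x : ℕ → ℕ} {i : ℕ} (hi : 1 ≤ i) (hx : x 0 = 1) :
    lexLt ten (Dop^[i] x) := by
  rw [show i = (i-1)+1 by omega, Function.iterate_succ_apply']
  exact ten_lt_Dop (DopIter_head hx (i-1))

lemma lam_lt_E {r : ℕ} (hr : 3 ≤ r) (hodd : r % 2 = 1) : lexLt lam (Ew r) := by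
  refine ⟨r+1, fun j hj => ?_, ?_⟩
  · exact (Ew_eq_lam_below hr hodd (by omega)).symm
  · have h1 : Ew r (r+1) = 1 := by
      rw [Ew_mod (by omega), Nat.add_mod_left r 1, Nat.mod_eq_of_lt (by omega)]
      rw [Ew_small (by omega) (by omega)]
    rw [h1, lam_val, if_neg (by omega)]
    omega

lemma Dop_lt_E {y : ℕ → ℕ} (hy : isSeq y) {r : ℕ} (hr : 3 ≤ r) (hodd : r % 2 = 1) :
    lexLt (Dop y) (Ew r) :=
  lexLt_of_le_of_lt (Dop_le_lam hy) (lam_lt_E hr hodd)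

lemma DopIter_lt_E {y : ℕ → ℕ} (hy : isSeq y) {i r : ℕ} (hi : 1 ≤ i)
    (hr : 3 ≤ r) (hodd : r % 2 = 1) : lexLt (Dop^[i] y) (Ew r) := by
  rw [show i = (i-1)+1 by omega, Function.iterate_succ_apply']
  exact Dop_lt_E (isSeq_DopIter hy (i-1)) hr hodd

lemma ten_lt_E {r : ℕ} (hr : 3 ≤ r) : lexLt ten (Ew r) :=
  ten_lt_head11 Ew_zero (by rw [Ew_small (by omega) (by omega)])

lemma E_lt_E {p q : ℕ} (hp : 1 ≤ p) (hpq : p < q) :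
    lexLt (Ew (2*q+1)) (Ew (2*p+1)) := by
  refine ⟨2*p+2, fun j hj => ?_, ?_⟩
  · rw [Ew_eq_lam_below (by omega) (by omega) (by omega),
      Ew_eq_lam_below (by omega) (by omega) (by omega)]
  · have h1 : Ew (2*q+1) (2*p+2) = 0 := by
      rw [Ew_small (by omega) (by omega)]; omega
    have h2 : Ew (2*p+1) (2*p+2) = 1 := by
      rw [Ew_mod (by omega), show 2*p+2 = (2*p+1)+1 by ring, Nat.add_mod_left,
        Nat.mod_eq_of_lt (by omega), Ew_small (by omega) (by omega)]
    rw [h1, h2]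
    omega

/-- Forward direction: k ▷ m implies AA m ≺ AA k. -/
lemma AA_shark_lt {k m : ℕ} (h : sharkGt k m) (hk : 2 ≤ k) (hm : 2 ≤ m) :
    lexLt (AA m) (AA k) := by
  obtain ⟨i, p, j, q, hkf, hmf, hcase⟩ := h
  have hEseq : ∀ r : ℕ, isSeq (Ew r) := isSeq_Ew
  rcases hcase with ⟨hp, hq, hij⟩ | ⟨hp, hq, hij, hpq⟩ | ⟨hp, hq⟩ | ⟨hp, hq, hij⟩
  · -- p,q ≥ 1, i < j
    subst hkf hmf
    rw [AA_pow_odd p hp i, AA_pow_odd q hq j,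
      show j = i + (j - i) by omega, Function.iterate_add_apply]
    exact DopIter_mono_lt
      (DopIter_lt_E (hEseq _) (by omega) (by omega) (by omega)) i
  · -- p,q ≥ 1, i = j, p < q
    subst hkf hmf hij
    rw [AA_pow_odd p hp i, AA_pow_odd q hq i]
    exact DopIter_mono_lt (E_lt_E hp hpq) i
  · -- p ≥ 1, q = 0
    subst hkf hmf hq
    have hj1 : 1 ≤ j := by
      by_contra hj0
      have : j = 0 := by omega
      subst this
      simp at hm
    rw [show 2^j * (2*0+1) = 2^j by ring, AA_pow_odd p hp i, AA_pow2 j hj1]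
    rcases le_or_gt i (j-1) with hcase2 | hcase2
    · rw [show j - 1 = i + (j-1-i) by omega, Function.iterate_add_apply]
      rcases Nat.eq_zero_or_pos (j-1-i) with hz | hz
      · rw [hz]
        exact DopIter_mono_lt (ten_lt_E (by omega)) i
      · exact DopIter_mono_lt
          (DopIter_lt_E isSeq_ten (by omega) (by omega) (by omega)) i
    · rw [show i = (j-1) + (i-(j-1)) by omega, Function.iterate_add_apply]
      exact DopIter_mono_lt (ten_lt_DopIter (by omega) Ew_zero) (j-1)
  · -- p = q = 0, j < i
    subst hkf hmf hp hq
    have hj1 : 1 ≤ j := by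
      by_contra hj0
      have : j = 0 := by omega
      subst this
      simp at hm
    rw [show 2^j * (2*0+1) = 2^j by ring, show 2^i * (2*0+1) = 2^i by ring,
      AA_pow2 i (by omega), AA_pow2 j hj1,
      show i - 1 = (j-1) + (i-j) by omega, Function.iterate_add_apply]
    exact DopIter_mono_lt (ten_lt_DopIter (by omega) rfl) (j-1)
/-! ### Sharkovskii ordering arithmetic -/

lemma two_pow_odd_decomp : ∀ k, 1 ≤ k → ∃ i p, k = 2^i * (2*p+1) := by
  intro k
  induction k using Nat.strong_induction_on with
  | _ k IH =>
    intro hk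
    rcases Nat.mod_two_eq_zero_or_one k with he | ho
    · obtain ⟨i, p, hip⟩ := IH (k/2) (by omega) (by omega)
      exact ⟨i+1, p, by rw [pow_succ, show 2^i * 2 * (2*p+1) = 2 * (2^i * (2*p+1)) by ring]; omega⟩
    · exact ⟨0, k/2, by rw [pow_zero]; omega⟩

lemma two_pow_odd_unique : ∀ i j p q : ℕ, 2^i * (2*p+1) = 2^j * (2*q+1) →
    i = j ∧ p = q := by
  intro i
  induction i with
  | zero =>
    intro j p q h
    rcases Nat.eq_zero_or_pos j with rfl | hj
    · simp only [pow_zero, one_mul] at h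
      omega
    · exfalso
      rw [pow_zero, one_mul] at h
      rw [show j = (j-1)+1 by omega, pow_succ] at h
      rw [show 2^(j-1) * 2 * (2*q+1) = 2 * (2^(j-1) * (2*q+1)) by ring] at h
      omega
  | succ i ih =>
    intro j p q h
    rcases Nat.eq_zero_or_pos j with rfl | hj
    · exfalso
      rw [pow_zero, one_mul] at h
      rw [pow_succ, show 2^i * 2 * (2*p+1) = 2 * (2^i * (2*p+1)) by ring] at h
      omega
    · rw [show j = (j-1)+1 by omega, pow_succ, pow_succ] at h
      rw [show 2^i * 2 * (2*p+1) = 2 * (2^i * (2*p+1)) by ring,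
        show 2^(j-1) * 2 * (2*q+1) = 2 * (2^(j-1) * (2*q+1)) by ring] at h
      have h2 : 2^i * (2*p+1) = 2^(j-1) * (2*q+1) := by omega
      obtain ⟨h3, h4⟩ := ih (j-1) p q h2
      omega

lemma sharkGt_irrefl (k : ℕ) : ¬ sharkGt k k := by
  rintro ⟨i, p, j, q, h1, h2, hcase⟩
  rw [h1] at h2
  obtain ⟨hij, hpq⟩ := two_pow_odd_unique i j p q h2
  subst hij hpq
  rcases hcase with ⟨_, _, h⟩ | ⟨_, _, _, h⟩ | ⟨h, h'⟩ | ⟨_, _, h⟩ <;> omega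

lemma sharkGt_total {k m : ℕ} (hk : 1 ≤ k) (hm : 1 ≤ m) (hne : k ≠ m) :
    sharkGt k m ∨ sharkGt m k := by
  obtain ⟨i, p, hk'⟩ := two_pow_odd_decomp k hk
  obtain ⟨j, q, hm'⟩ := two_pow_odd_decomp m hm
  rcases Nat.eq_zero_or_pos p with rfl | hp
  · rcases Nat.eq_zero_or_pos q with rfl | hq
    · -- both powers of two
      have hij : i ≠ j := fun h => hne (by rw [hk', hm', h])
      rcases lt_or_gt_of_ne hij with h | h
      · exact Or.inr ⟨j, 0, i, 0, hm', hk', Or.inr (Or.inr (Or.inr ⟨rfl, rfl, h⟩))⟩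
      · exact Or.inl ⟨i, 0, j, 0, hk', hm', Or.inr (Or.inr (Or.inr ⟨rfl, rfl, h⟩))⟩
    · exact Or.inr ⟨j, q, i, 0, hm', hk', Or.inr (Or.inr (Or.inl ⟨hq, rfl⟩))⟩
  · rcases Nat.eq_zero_or_pos q with rfl | hq
    · exact Or.inl ⟨i, p, j, 0, hk', hm', Or.inr (Or.inr (Or.inl ⟨hp, rfl⟩))⟩
    · rcases lt_trichotomy i j with h | h | h
      · exact Or.inl ⟨i, p, j, q, hk', hm', Or.inl ⟨hp, hq, h⟩⟩
      · subst h
        rcases lt_trichotomy p q with h2 | h2 | h2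
        · exact Or.inl ⟨i, p, i, q, hk', hm', Or.inr (Or.inl ⟨hp, hq, rfl, h2⟩)⟩
        · exact absurd (by rw [hk', hm', h2]) hne
        · exact Or.inr ⟨i, q, i, p, hm', hk', Or.inr (Or.inl ⟨hq, hp, rfl, h2⟩)⟩
      · exact Or.inr ⟨j, q, i, p, hm', hk', Or.inl ⟨hq, hp, h⟩⟩


/-- a_k ≻ a_m iff k ▷ m in the Sharkovskii ordering. -/
theorem stmt6 (k m : ℕ) (hk : 2 ≤ k) (hm : 2 ≤ m) (a b : ℕ → ℕ)
    (ha : minGamma k a) (hb : minGamma m b) :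
    lexLt b a ↔ sharkGt k m := by
  obtain ⟨⟨hGa, hpa⟩, hmina⟩ := ha
  obtain ⟨⟨hGb, hpb⟩, hminb⟩ := hb
  have hAk := AA_props k hk
  have hAm := AA_props m hm
  have haA : a = AA k :=
    lexLe_antisymm (hmina (AA k) hAk.1 hAk.2.1)
      (AA_min k hk a (Gamma_to_GammaH hGa) hpa)
  have hbA : b = AA m :=
    lexLe_antisymm (hminb (AA m) hAm.1 hAm.2.1)
      (AA_min m hm b (Gamma_to_GammaH hGb) hpb)
  subst haA hbA
  constructor
  · intro hlt
    by_cases hkm : k = m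
    · subst hkm
      exact absurd hlt (lexLt_irrefl _)
    · rcases sharkGt_total (by omega) (by omega) hkm with h | h
      · exact h
      · exact absurd (AA_shark_lt h hm hk) (fun h2 => lexLt_asymm_s6 hlt h2)
  · intro h
    exact AA_shark_lt h hk hm
end
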